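/- arXiv:math/0601605 — 12 statements merged into one kernel-verified Lean document; each statement's English description precedes it below -/
import Mathlib

section
/- If a unitary orthonormal basis F = (f_0=1, f_1, ..., f_n) of L^2(μ) on a finite probability space (E, μ) with μ(x) > 0 for all x has the GKS property (all multiplication coefficients a_{ijk} = ∫ f_i f_j f_k dμ are nonnegative), then there exists a unique point x_0 ∈ E at which every f_i attains its maximum, and moreover |f_i(x)| ≤ f_i(x_0) for all i and all x ∈ E. -/
lemma gks_complete {E : Type*} [Fintype E] (n : ℕ)
    (μ : E → ℝ) (f : Fin (n + 1) → E → ℝ)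
    (hcard : Fintype.card E = n + 1)
    (hμpos : ∀ x, 0 < μ x)
    (horth : ∀ i j, ∑ x, μ x * f i x * f j x = if i = j then (1 : ℝ) else 0) :
    (∀ x, ∑ i, f i x * f i x = (μ x)⁻¹) ∧ (∀ x y, x ≠ y → ∑ i, f i x * f i y = 0) := by
  classical
  let e : Fin (n+1) ≃ E := (Fintype.equivFinOfCardEq hcard).symm
  set M : Matrix (Fin (n+1)) (Fin (n+1)) ℝ := fun i j => Real.sqrt (μ (e j)) * f i (e j) with hM
  have h1 : M * M.transpose = 1 := by
    ext i i'
    simp only [Matrix.mul_apply, Matrix.transpose_apply, Matrix.one_apply]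
    simp only [hM]
    have key : ∀ j : Fin (n+1), (Real.sqrt (μ (e j)) * f i (e j)) * (Real.sqrt (μ (e j)) * f i' (e j))
        = μ (e j) * f i (e j) * f i' (e j) := by
      intro j
      have hs : Real.sqrt (μ (e j)) * Real.sqrt (μ (e j)) = μ (e j) :=
        Real.mul_self_sqrt (le_of_lt (hμpos (e j)))
      linear_combination f i (e j) * f i' (e j) * hs
    rw [Finset.sum_congr rfl (fun j _ => key j)]
    rw [Equiv.sum_comp e (fun x => μ x * f i x * f i' x)]
    exact horth i i'
  have h2 : M.transpose * M = 1 := mul_eq_one_comm.mp h1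
  have main : ∀ x y : E, Real.sqrt (μ x) * Real.sqrt (μ y) * ∑ i, f i x * f i y
      = if x = y then (1:ℝ) else 0 := by
    intro x y
    have hx := congrFun (congrFun h2 (e.symm x)) (e.symm y)
    simp only [Matrix.mul_apply, Matrix.transpose_apply, Matrix.one_apply,
      Equiv.apply_symm_apply] at hx
    simp only [hM, Equiv.apply_symm_apply] at hx
    have hfac : ∑ i, (Real.sqrt (μ x) * f i x) * (Real.sqrt (μ y) * f i y)
        = Real.sqrt (μ x) * Real.sqrt (μ y) * ∑ i, f i x * f i y := by
      rw [Finset.mul_sum]; exact Finset.sum_congr rfl fun i _ => by ring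
    rw [hfac] at hx
    rw [hx]
    by_cases h : x = y
    · simp [h]
    · have h' : e.symm x ≠ e.symm y := fun hc => h (e.symm.injective hc)
      simp [h, h']
  constructor
  · intro x
    have := main x x
    rw [if_pos rfl, Real.mul_self_sqrt (le_of_lt (hμpos x))] at this
    exact eq_inv_of_mul_eq_one_right this
  · intro x y hxy
    have := main x y
    rw [if_neg hxy] at this
    have hsx : Real.sqrt (μ x) > 0 := Real.sqrt_pos.mpr (hμpos x)
    have hsy : Real.sqrt (μ y) > 0 := Real.sqrt_pos.mpr (hμpos y)
    have hne := mul_ne_zero (ne_of_gt hsx) (ne_of_gt hsy)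
    exact (mul_eq_zero.mp this).resolve_left hne


/-- If a real unitary orthonormal basis `f` (with `f 0 = 1`) of `L²(μ)` on a
finite probability space with everywhere positive weights has the GKS property
(all triple products nonnegative), then there is a unique point `x₀` at which every `f i`
attains its maximum, and moreover `|f i x| ≤ f i x₀` for all `i`, `x`. -/
theorem stmt0 {E : Type*} [Fintype E] [Nonempty E] (n : ℕ)
    (μ : E → ℝ) (f : Fin (n + 1) → E → ℝ)
    (hcard : Fintype.card E = n + 1)
    (hμpos : ∀ x, 0 < μ x) (hμsum : ∑ x, μ x = 1)
    (hf0 : ∀ x, f 0 x = 1)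
    (horth : ∀ i j, ∑ x, μ x * f i x * f j x = if i = j then (1 : ℝ) else 0)
    (hGKS : ∀ i j k, 0 ≤ ∑ x, μ x * f i x * f j x * f k x) :
    ∃! x₀ : E, ∀ i x, |f i x| ≤ f i x₀ := by
  classical
  obtain ⟨hcomp, hcomp0⟩ := gks_complete n μ f hcard hμpos horth
  set a : Fin (n+1) → Fin (n+1) → Fin (n+1) → ℝ :=
    fun i j k => ∑ y, μ y * f i y * f j y * f k y with ha
  have ha_nonneg : ∀ i j k, 0 ≤ a i j k := hGKS
  have hasymm : ∀ i j k, a i j k = a i k j := by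
    intro i j k
    exact Finset.sum_congr rfl fun y _ => by ring
  -- product expansion
  have hprod : ∀ i j x, f i x * f j x = ∑ k, a i j k * f k x := by
    intro i j x
    have step1 : ∀ k : Fin (n+1), a i j k * f k x = ∑ y, μ y * f i y * f j y * (f k y * f k x) := by
      intro k
      rw [ha, Finset.sum_mul]
      exact Finset.sum_congr rfl fun y _ => by ring
    rw [Finset.sum_congr rfl (fun k _ => step1 k), Finset.sum_comm]
    have step2 : ∀ y : E, (∑ k, μ y * f i y * f j y * (f k y * f k x))
        = μ y * f i y * f j y * ∑ k, f k y * f k x := by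
      intro y; rw [Finset.mul_sum]
    rw [Finset.sum_congr rfl (fun y _ => step2 y)]
    have step3 : ∀ y : E, μ y * f i y * f j y * ∑ k, f k y * f k x
        = if y = x then f i x * f j x else 0 := by
      intro y
      by_cases h : y = x
      · subst h
        rw [hcomp y, if_pos rfl]
        have hne : μ y ≠ 0 := (hμpos y).ne'
        field_simp
      · rw [hcomp0 y x h, if_neg h, mul_zero]
    rw [Finset.sum_congr rfl (fun y _ => step3 y)]
    simp
  -- Parseval
  have parseval : ∀ w : Fin (n+1) → ℝ, ∑ y, μ y * (∑ i, w i * f i y)^2 = ∑ i, (w i)^2 := by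
    intro w
    have expand : ∀ y : E, μ y * (∑ i, w i * f i y)^2
        = ∑ i, ∑ j, w i * w j * (μ y * f i y * f j y) := by
      intro y
      rw [sq]
      simp only [Finset.sum_mul, Finset.mul_sum]
      exact Finset.sum_congr rfl fun i _ => Finset.sum_congr rfl fun j _ => by ring
    rw [Finset.sum_congr rfl (fun y _ => expand y)]
    rw [Finset.sum_comm]
    refine Finset.sum_congr rfl fun i _ => ?_
    rw [Finset.sum_comm]
    have inner : ∀ j : Fin (n+1), (∑ y, w i * w j * (μ y * f i y * f j y))
        = w i * w j * (if i = j then (1:ℝ) else 0) := by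
      intro j
      rw [← horth i j, Finset.mul_sum]
    rw [Finset.sum_congr rfl (fun j _ => inner j)]
    simp [sq]
  -- generalized Parseval / quadratic form identity
  have gparseval : ∀ (c : E → ℝ) (w : Fin (n+1) → ℝ),
      ∑ i, ∑ j, (∑ y, c y * f i y * f j y) * (w i * w j)
      = ∑ y, c y * (∑ i, w i * f i y)^2 := by
    intro c w
    have expand : ∀ y : E, c y * (∑ i, w i * f i y)^2
        = ∑ i, ∑ j, w i * w j * (c y * f i y * f j y) := by
      intro y
      rw [sq]
      simp only [Finset.sum_mul, Finset.mul_sum]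
      exact Finset.sum_congr rfl fun i _ => Finset.sum_congr rfl fun j _ => by ring
    symm
    calc ∑ y, c y * (∑ i, w i * f i y)^2
        = ∑ y, ∑ i, ∑ j, w i * w j * (c y * f i y * f j y) :=
          Finset.sum_congr rfl fun y _ => expand y
      _ = ∑ i, ∑ y, ∑ j, w i * w j * (c y * f i y * f j y) := Finset.sum_comm
      _ = ∑ i, ∑ j, ∑ y, w i * w j * (c y * f i y * f j y) :=
          Finset.sum_congr rfl fun i _ => Finset.sum_comm
      _ = ∑ i, ∑ j, (∑ y, c y * f i y * f j y) * (w i * w j) := by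
          refine Finset.sum_congr rfl fun i _ => Finset.sum_congr rfl fun j _ => ?_
          rw [Finset.sum_mul]
          exact Finset.sum_congr rfl fun y _ => by ring
  have hAY : ∀ i j : Fin (n+1), (∑ k, a i j k)
      = ∑ y, (μ y * ∑ k, f k y) * f i y * f j y := by
    intro i j
    calc ∑ k, a i j k = ∑ k, ∑ y, μ y * f i y * f j y * f k y := by rw [ha]
      _ = ∑ y, ∑ k, μ y * f i y * f j y * f k y := Finset.sum_comm
      _ = ∑ y, (μ y * ∑ k, f k y) * f i y * f j y := by
          refine Finset.sum_congr rfl fun y _ => ?_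
          rw [Finset.mul_sum, Finset.sum_mul, Finset.sum_mul]
          exact Finset.sum_congr rfl fun k _ => by ring
  have qform : ∀ w : Fin (n+1) → ℝ,
      ∑ i, ∑ j, (∑ k, a i j k) * (w i * w j)
      = ∑ y, (μ y * ∑ k, f k y) * (∑ i, w i * f i y)^2 := by
    intro w
    rw [Finset.sum_congr rfl fun i (_ : i ∈ Finset.univ) =>
      Finset.sum_congr rfl fun j (_ : j ∈ Finset.univ) => by rw [hAY i j]]
    exact gparseval (fun y => μ y * ∑ k, f k y) w
  -- choose maximizer of h = ∑ f i
  obtain ⟨x₀, -, hmax⟩ := Finset.exists_max_image Finset.univ (fun x => ∑ i, f i x)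
    Finset.univ_nonempty
  have hmax' : ∀ x : E, (∑ i, f i x) ≤ ∑ i, f i x₀ := fun x => hmax x (Finset.mem_univ x)
  have hA0 : ∀ i, (∑ k, a i 0 k) = 1 := by
    intro i
    have h' : ∀ k, a i 0 k = if i = k then (1:ℝ) else 0 := by
      intro k
      rw [ha]
      rw [← horth i k]
      exact Finset.sum_congr rfl fun y _ => by rw [hf0]; ring
    rw [Finset.sum_congr rfl (fun k _ => h' k)]
    simp
  -- nonnegativity at x₀
  have hx₀ : ∀ i, 0 ≤ f i x₀ := by
    have hQs : ∑ i, ∑ j, (∑ k, a i j k) * (f i x₀ * f j x₀)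
        = (∑ k, f k x₀) * (μ x₀)⁻¹ := by
      rw [qform (fun i => f i x₀)]
      have step : ∀ y : E, (μ y * ∑ k, f k y) * (∑ i, f i x₀ * f i y)^2
          = if y = x₀ then (∑ k, f k x₀) * (μ x₀)⁻¹ else 0 := by
        intro y
        by_cases h : y = x₀
        · subst h
          rw [hcomp y, if_pos rfl]
          have hne : μ y ≠ 0 := (hμpos y).ne'
          field_simp
        · rw [hcomp0 x₀ y (fun hc => h hc.symm), if_neg h]
          simp
      rw [Finset.sum_congr rfl (fun y _ => step y)]
      simp
    have hQu_le : ∑ i, ∑ j, (∑ k, a i j k) * (|f i x₀| * |f j x₀|)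
        ≤ (∑ k, f k x₀) * (μ x₀)⁻¹ := by
      rw [qform (fun i => |f i x₀|)]
      have step : ∀ y : E, (μ y * ∑ k, f k y) * (∑ i, |f i x₀| * f i y)^2
          ≤ (μ y * ∑ k, f k x₀) * (∑ i, |f i x₀| * f i y)^2 := by
        intro y
        apply mul_le_mul_of_nonneg_right _ (sq_nonneg _)
        exact mul_le_mul_of_nonneg_left (hmax' y) (le_of_lt (hμpos y))
      calc ∑ y, (μ y * ∑ k, f k y) * (∑ i, |f i x₀| * f i y)^2
          ≤ ∑ y, (μ y * ∑ k, f k x₀) * (∑ i, |f i x₀| * f i y)^2 :=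
            Finset.sum_le_sum fun y _ => step y
        _ = (∑ k, f k x₀) * ∑ y, μ y * (∑ i, |f i x₀| * f i y)^2 := by
            rw [Finset.mul_sum]; exact Finset.sum_congr rfl fun y _ => by ring
        _ = (∑ k, f k x₀) * ∑ i, |f i x₀|^2 := by rw [parseval (fun i => |f i x₀|)]
        _ = (∑ k, f k x₀) * (μ x₀)⁻¹ := by
            congr 1
            rw [← hcomp x₀]
            exact Finset.sum_congr rfl fun i _ => by rw [sq_abs, sq]
    have hDnn : ∀ i j : Fin (n+1),
        0 ≤ (∑ k, a i j k) * (|f i x₀| * |f j x₀|) - (∑ k, a i j k) * (f i x₀ * f j x₀) := by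
      intro i j
      have hAnn : 0 ≤ ∑ k, a i j k := Finset.sum_nonneg fun k _ => ha_nonneg i j k
      have : f i x₀ * f j x₀ ≤ |f i x₀| * |f j x₀| := by
        calc f i x₀ * f j x₀ ≤ |f i x₀ * f j x₀| := le_abs_self _
          _ = |f i x₀| * |f j x₀| := abs_mul _ _
      nlinarith
    have htot : ∑ i, ∑ j, ((∑ k, a i j k) * (|f i x₀| * |f j x₀|)
        - (∑ k, a i j k) * (f i x₀ * f j x₀)) ≤ 0 := by
      have hsplit : ∑ i, ∑ j, ((∑ k, a i j k) * (|f i x₀| * |f j x₀|)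
          - (∑ k, a i j k) * (f i x₀ * f j x₀))
          = (∑ i, ∑ j, (∑ k, a i j k) * (|f i x₀| * |f j x₀|))
            - ∑ i, ∑ j, (∑ k, a i j k) * (f i x₀ * f j x₀) := by
        rw [← Finset.sum_sub_distrib]
        exact Finset.sum_congr rfl fun i _ => Finset.sum_sub_distrib _ _
      rw [hsplit, hQs]
      linarith [hQu_le]
    intro i
    have hrow_nn : ∀ i' : Fin (n+1), 0 ≤ ∑ j, ((∑ k, a i' j k) * (|f i' x₀| * |f j x₀|)
        - (∑ k, a i' j k) * (f i' x₀ * f j x₀)) :=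
      fun i' => Finset.sum_nonneg fun j _ => hDnn i' j
    have hrow_le : ∑ j, ((∑ k, a i j k) * (|f i x₀| * |f j x₀|)
        - (∑ k, a i j k) * (f i x₀ * f j x₀)) ≤ 0 :=
      le_trans (Finset.single_le_sum (fun i' _ => hrow_nn i') (Finset.mem_univ i)) htot
    have hD0 : (∑ k, a i 0 k) * (|f i x₀| * |f (0 : Fin (n+1)) x₀|)
        - (∑ k, a i 0 k) * (f i x₀ * f (0 : Fin (n+1)) x₀) = 0 := by
      have h1 : (∑ k, a i 0 k) * (|f i x₀| * |f (0 : Fin (n+1)) x₀|)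
          - (∑ k, a i 0 k) * (f i x₀ * f (0 : Fin (n+1)) x₀)
          ≤ ∑ j, ((∑ k, a i j k) * (|f i x₀| * |f j x₀|)
            - (∑ k, a i j k) * (f i x₀ * f j x₀)) :=
        Finset.single_le_sum (fun j _ => hDnn i j) (Finset.mem_univ 0)
      linarith [hDnn i 0]
    rw [hA0 i, hf0 x₀] at hD0
    have habs : |f i x₀| = f i x₀ := by
      have h1 : |(1:ℝ)| = 1 := abs_one
      rw [h1] at hD0
      linarith [hD0]
    rw [← habs]
    exact abs_nonneg _
  -- main bound
  have hbound : ∀ i x, |f i x| ≤ f i x₀ := by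
    intro i x
    set T := ∑ j, |f j x| * f j x₀ with hT
    have hT1 : (1:ℝ) ≤ T := by
      have h0 : |f (0 : Fin (n+1)) x| * f (0 : Fin (n+1)) x₀ = 1 := by
        rw [hf0, hf0, abs_one, one_mul]
      calc (1:ℝ) = |f (0 : Fin (n+1)) x| * f (0 : Fin (n+1)) x₀ := h0.symm
        _ ≤ T := Finset.single_le_sum
            (f := fun j => |f j x| * f j x₀)
            (fun j _ => mul_nonneg (abs_nonneg _) (hx₀ j)) (Finset.mem_univ 0)
    have hD1 : ∑ j, |f j x| * (∑ k, a i j k * f k x₀) = f i x₀ * T := by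
      rw [hT, Finset.mul_sum]
      refine Finset.sum_congr rfl fun j _ => ?_
      rw [← hprod i j x₀]
      ring
    have hD2 : |f i x| * T ≤ ∑ j, |f j x| * (∑ k, a i j k * f k x₀) := by
      have swap : ∑ j, |f j x| * (∑ k, a i j k * f k x₀)
          = ∑ k, (∑ j, a i j k * |f j x|) * f k x₀ := by
        calc ∑ j, |f j x| * (∑ k, a i j k * f k x₀)
            = ∑ j, ∑ k, (a i j k * |f j x|) * f k x₀ := by
              refine Finset.sum_congr rfl fun j _ => ?_
              rw [Finset.mul_sum]
              exact Finset.sum_congr rfl fun k _ => by ring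
          _ = ∑ k, ∑ j, (a i j k * |f j x|) * f k x₀ := Finset.sum_comm
          _ = ∑ k, (∑ j, a i j k * |f j x|) * f k x₀ :=
              Finset.sum_congr rfl fun k _ => (Finset.sum_mul _ _ _).symm
      rw [swap]
      have inner : ∀ k, |f i x| * |f k x| ≤ ∑ j, a i j k * |f j x| := by
        intro k
        have h3 : ∑ j, a i j k * f j x = f i x * f k x := by
          rw [hprod i k x]
          exact Finset.sum_congr rfl fun j _ => by rw [hasymm i j k]
        calc |f i x| * |f k x| = |f i x * f k x| := (abs_mul _ _).symm
          _ = |∑ j, a i j k * f j x| := by rw [h3]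
          _ ≤ ∑ j, |a i j k * f j x| := Finset.abs_sum_le_sum_abs _ _
          _ = ∑ j, a i j k * |f j x| := Finset.sum_congr rfl fun j _ => by
              rw [abs_mul, abs_of_nonneg (ha_nonneg i j k)]
      calc |f i x| * T = ∑ k, (|f i x| * |f k x|) * f k x₀ := by
            rw [hT, Finset.mul_sum]
            exact Finset.sum_congr rfl fun k _ => by ring
        _ ≤ ∑ k, (∑ j, a i j k * |f j x|) * f k x₀ :=
            Finset.sum_le_sum fun k _ => mul_le_mul_of_nonneg_right (inner k) (hx₀ k)
    have hfin : |f i x| * T ≤ f i x₀ * T := le_trans hD2 (le_of_eq hD1)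
    exact le_of_mul_le_mul_right hfin (lt_of_lt_of_le one_pos hT1)
  -- conclusion
  refine ⟨x₀, hbound, ?_⟩
  intro y hy
  by_contra hne
  have heq : ∀ i, f i y = f i x₀ := by
    intro i
    have h1 : f i y ≤ |f i y| := le_abs_self _
    have h2 := hbound i y
    have h3 := hy i x₀
    have h4 : f i x₀ ≤ |f i x₀| := le_abs_self _
    linarith
  have hzero := hcomp0 y x₀ hne
  have hval : ∑ i, f i y * f i x₀ = (μ x₀)⁻¹ := by
    rw [Finset.sum_congr rfl fun i _ => by rw [heq i]]
    exact hcomp x₀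
  rw [hzero] at hval
  have hpos : (0:ℝ) < (μ x₀)⁻¹ := inv_pos.mpr (hμpos x₀)
  linarith
end

section
/- A function that can be written with nonnegative coefficients in a GKS basis has nonnegative integral with respect to μ; moreover, the product of two such functions is again of this form. -/
/-!
Orthonormality makes the `n + 1` functions `f i` linearly independent, so, as `E` has `n + 1`
points, they form a basis and every `g` expands as `g = ∑ i, ⟪g, f i⟫ f i` with respect to the
weighted pairing `⟪u, v⟫ = ∑ x, μ x * u x * v x`. A GKS function is thus one with nonnegative
coefficients. Its integral is its coefficient along `f 0 = 1`, and expanding a product gives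
`⟪g h, f k⟫ = ∑ i j, ⟪g, f i⟫ ⟪h, f j⟫ ∫ f i f j f k`, a sum of nonnegative terms.
-/

open Finset

section

variable {ι E : Type*} [Fintype ι] [Fintype E] [DecidableEq ι]

def WeightedOrthonormal (μ : E → ℝ) (f : ι → E → ℝ) : Prop :=
  ∀ i j, ∑ x, μ x * f i x * f j x = if i = j then 1 else 0

namespace WeightedOrthonormal

variable {μ : E → ℝ} {f : ι → E → ℝ}

theorem sum_mul_sum_mul (hf : WeightedOrthonormal μ f) (c : ι → ℝ) (j : ι) :
    ∑ x, μ x * (∑ i, c i * f i x) * f j x = c j := by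
  calc ∑ x, μ x * (∑ i, c i * f i x) * f j x
      = ∑ i, c i * ∑ x, μ x * f i x * f j x := by
        simp only [mul_sum, sum_mul]
        rw [sum_comm]
        exact sum_congr rfl fun i _ => sum_congr rfl fun x _ => by ring
    _ = c j := by simp [hf _ j]

theorem linearIndependent (hf : WeightedOrthonormal μ f) : LinearIndependent ℝ f := by
  refine Fintype.linearIndependent_iff.mpr fun c hc j => ?_
  have hc' : ∀ x, ∑ i, c i * f i x = 0 := fun x => by simpa using congrFun hc x
  simpa [hc'] using (hf.sum_mul_sum_mul c j).symm

theorem eq_sum_mul (hf : WeightedOrthonormal μ f) (hcard : Fintype.card ι = Fintype.card E)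
    (g : E → ℝ) (x : E) : g x = ∑ i, (∑ y, μ y * g y * f i y) * f i x := by
  have hspan : Submodule.span ℝ (Set.range f) = ⊤ :=
    hf.linearIndependent.span_eq_top_of_card_eq_finrank'
      (by rw [Module.finrank_fintype_fun_eq_card, hcard])
  obtain ⟨c, hc⟩ := (Submodule.mem_span_range_iff_exists_fun ℝ).mp
    (hspan ▸ Submodule.mem_top : g ∈ Submodule.span ℝ (Set.range f))
  have hg : ∀ y, g y = ∑ i, c i * f i y := fun y => by simp [← hc]
  simp only [hg, hf.sum_mul_sum_mul]

end WeightedOrthonormal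

end

theorem sum_mul_mul_mul_eq_sum_sum {ι E : Type*} [Fintype ι] [Fintype E] (μ : E → ℝ)
    (f : ι → E → ℝ) {g h : E → ℝ} {a b : ι → ℝ} (hg : ∀ x, g x = ∑ i, a i * f i x)
    (hh : ∀ x, h x = ∑ j, b j * f j x) (k : E → ℝ) :
    ∑ x, μ x * (g x * h x) * k x = ∑ i, ∑ j, a i * b j * ∑ x, μ x * f i x * f j x * k x := by
  calc ∑ x, μ x * (g x * h x) * k x
      = ∑ x, ∑ i, ∑ j, a i * b j * (μ x * f i x * f j x * k x) := by
        refine sum_congr rfl fun x _ => ?_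
        rw [hg, hh, sum_mul_sum, mul_sum, sum_mul]
        refine sum_congr rfl fun i _ => ?_
        rw [mul_sum, sum_mul]
        exact sum_congr rfl fun j _ => by ring
    _ = ∑ i, ∑ j, ∑ x, a i * b j * (μ x * f i x * f j x * k x) := by
        rw [sum_comm]
        exact sum_congr rfl fun i _ => sum_comm
    _ = ∑ i, ∑ j, a i * b j * ∑ x, μ x * f i x * f j x * k x := by
        simp only [mul_sum]

theorem stmt2_general {E : Type*} [Fintype E] (n : ℕ)
    (μ : E → ℝ) (f : Fin (n + 1) → E → ℝ)
    (hcard : Fintype.card E = n + 1)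
    (hf0 : ∀ x, f 0 x = 1)
    (horth : ∀ i j, ∑ x, μ x * f i x * f j x = if i = j then (1 : ℝ) else 0)
    (hGKS : ∀ i j k, 0 ≤ ∑ x, μ x * f i x * f j x * f k x) :
    (∀ g : E → ℝ, (∀ i, 0 ≤ ∑ x, μ x * g x * f i x) → 0 ≤ ∑ x, μ x * g x) ∧
    (∀ g h : E → ℝ, (∀ i, 0 ≤ ∑ x, μ x * g x * f i x) →
      (∀ i, 0 ≤ ∑ x, μ x * h x * f i x) →
      ∀ i, 0 ≤ ∑ x, μ x * (g x * h x) * f i x) := by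
  have hf : WeightedOrthonormal μ f := horth
  have hexp := hf.eq_sum_mul (by rw [Fintype.card_fin, hcard])
  refine ⟨fun g hg => by simpa [hf0] using hg 0, fun g h hg hh k => ?_⟩
  rw [sum_mul_mul_mul_eq_sum_sum μ f (hexp g) (hexp h)]
  exact sum_nonneg fun i _ => sum_nonneg fun j _ =>
    mul_nonneg (mul_nonneg (hg i) (hh j)) (hGKS i j k)

/-- A function written with nonnegative coefficients in a GKS basis
(a "GKS function") has nonnegative integral with respect to `μ`, and the product of two
GKS functions is again a GKS function. A function `g` is GKS iff `∫ g f_i dμ ≥ 0` for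
all `i`. -/
theorem stmt2 {E : Type*} [Fintype E] [Nonempty E] (n : ℕ)
    (μ : E → ℝ) (f : Fin (n + 1) → E → ℝ)
    (hcard : Fintype.card E = n + 1)
    (hμpos : ∀ x, 0 < μ x) (hμsum : ∑ x, μ x = 1)
    (hf0 : ∀ x, f 0 x = 1)
    (horth : ∀ i j, ∑ x, μ x * f i x * f j x = if i = j then (1 : ℝ) else 0)
    (hGKS : ∀ i j k, 0 ≤ ∑ x, μ x * f i x * f j x * f k x) :
    (∀ g : E → ℝ, (∀ i, 0 ≤ ∑ x, μ x * g x * f i x) → 0 ≤ ∑ x, μ x * g x) ∧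
    (∀ g h : E → ℝ, (∀ i, 0 ≤ ∑ x, μ x * g x * f i x) →
      (∀ i, 0 ≤ ∑ x, μ x * h x * f i x) →
      ∀ i, 0 ≤ ∑ x, μ x * (g x * h x) * f i x) :=
  stmt2_general n μ f hcard hf0 horth hGKS
end

section
/- For a GKS function f on a finite set with GKS basis, the set {x : f(x) = max_y |f(y)|} is nonempty, i.e., the maximum of |f| is attained at a point where f is positive (equals max|f|). -/
/-!
Since the basis has as many elements as `E` has points, orthonormality also gives the dual
relations, so every function expands in the basis. Expanding a product then writes its
coefficients as nonnegative combinations of the triple integrals `∫ fᵢ fⱼ fₖ`, so GKS functions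
are closed under products; hence all moments `∫ gʳ` are nonnegative. If `|g|` attained its
maximum `m > 0` only where `g = -m`, the odd moments `∫ (g / m)^(2k+1)` would tend to
`-μ {g = -m} < 0`.
-/

open Finset Filter Topology

section GKS

variable {ι E : Type*} [Fintype E]

def IsGKS (μ : E → ℝ) (f : ι → E → ℝ) (h : E → ℝ) : Prop :=
  ∀ i, 0 ≤ ∑ x, μ x * h x * f i x

variable [DecidableEq ι] {μ : E → ℝ} {f : ι → E → ℝ}

theorem isGKS_one {i₀ : ι} (hf₀ : ∀ x, f i₀ x = 1)
    (horth : ∀ i j, ∑ x, μ x * f i x * f j x = if i = j then 1 else 0) : IsGKS μ f 1 := by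
  intro i
  have hconst : ∀ x, μ x * (1 : E → ℝ) x * f i x = μ x * f i₀ x * f i x := fun x => by
    rw [hf₀, Pi.one_apply]
  rw [Finset.sum_congr rfl fun x _ => hconst x, horth]
  positivity

variable [Fintype ι]

/-- The matrices `(μ x * f i x)` and `(f i x)` are square and left inverse to each other
by orthonormality, hence also right inverse. -/
theorem sum_basis_mul_basis_eq_ite [DecidableEq E] (hcard : Fintype.card E = Fintype.card ι)
    (horth : ∀ i j, ∑ x, μ x * f i x * f j x = if i = j then 1 else 0) (x y : E) :
    ∑ i, f i x * (μ y * f i y) = if x = y then 1 else 0 := by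
  let A : Matrix ι E ℝ := Matrix.of fun i x => μ x * f i x
  let B : Matrix E ι ℝ := Matrix.of fun x i => f i x
  have hAB : A * B = 1 := by
    ext i j
    simpa [A, B, Matrix.mul_apply, Matrix.one_apply] using horth i j
  have hBA : B * A = 1 :=
    (Matrix.mul_eq_one_comm_of_equiv (Fintype.equivOfCardEq hcard.symm)).mp hAB
  simpa [A, B, Matrix.mul_apply, Matrix.one_apply] using congrFun (congrFun hBA x) y

theorem eq_sum_coeff_mul_basis (hcard : Fintype.card E = Fintype.card ι)
    (horth : ∀ i j, ∑ x, μ x * f i x * f j x = if i = j then 1 else 0) (h : E → ℝ) (x : E) :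
    h x = ∑ i, (∑ y, μ y * h y * f i y) * f i x := by
  classical
  calc h x = ∑ y, h y * ∑ i, f i x * (μ y * f i y) := by
        simp [sum_basis_mul_basis_eq_ite hcard horth]
    _ = ∑ i, (∑ y, μ y * h y * f i y) * f i x := by
        simp_rw [Finset.mul_sum, Finset.sum_mul]
        rw [Finset.sum_comm]
        exact Finset.sum_congr rfl fun i _ => Finset.sum_congr rfl fun y _ => by ring

theorem IsGKS.mul (hcard : Fintype.card E = Fintype.card ι)
    (horth : ∀ i j, ∑ x, μ x * f i x * f j x = if i = j then 1 else 0)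
    (hGKS : ∀ i j k, 0 ≤ ∑ x, μ x * f i x * f j x * f k x) {h₁ h₂ : E → ℝ}
    (H₁ : IsGKS μ f h₁) (H₂ : IsGKS μ f h₂) : IsGKS μ f (h₁ * h₂) := by
  intro k
  set c₁ := fun i : ι => ∑ y, μ y * h₁ y * f i y
  set c₂ := fun j : ι => ∑ y, μ y * h₂ y * f j y
  have hc₁ : ∀ i, 0 ≤ c₁ i := H₁
  have hc₂ : ∀ j, 0 ≤ c₂ j := H₂
  have e₁ : ∀ x, h₁ x = ∑ i, c₁ i * f i x := eq_sum_coeff_mul_basis hcard horth h₁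
  have e₂ : ∀ x, h₂ x = ∑ j, c₂ j * f j x := eq_sum_coeff_mul_basis hcard horth h₂
  clear_value c₁ c₂
  have hpoint : ∀ x, μ x * (h₁ * h₂) x * f k x
      = ∑ i, ∑ j, c₁ i * c₂ j * (μ x * f i x * f j x * f k x) := fun x => by
    rw [Pi.mul_apply, e₁, e₂, Finset.sum_mul_sum]
    simp only [Finset.mul_sum, Finset.sum_mul]
    exact Finset.sum_congr rfl fun i _ => Finset.sum_congr rfl fun j _ => by ring
  have hexpand : ∑ x, μ x * (h₁ * h₂) x * f k x
      = ∑ i, ∑ j, c₁ i * c₂ j * ∑ x, μ x * f i x * f j x * f k x := by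
    rw [Finset.sum_congr rfl fun x _ => hpoint x, Finset.sum_comm]
    refine Finset.sum_congr rfl fun i _ => ?_
    rw [Finset.sum_comm]
    exact Finset.sum_congr rfl fun j _ => (Finset.mul_sum _ _ _).symm
  rw [hexpand]
  exact Finset.sum_nonneg fun i _ => Finset.sum_nonneg fun j _ =>
    mul_nonneg (mul_nonneg (hc₁ i) (hc₂ j)) (hGKS i j k)

theorem IsGKS.pow (hcard : Fintype.card E = Fintype.card ι) {i₀ : ι} (hf₀ : ∀ x, f i₀ x = 1)
    (horth : ∀ i j, ∑ x, μ x * f i x * f j x = if i = j then 1 else 0)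
    (hGKS : ∀ i j k, 0 ≤ ∑ x, μ x * f i x * f j x * f k x) {h : E → ℝ} (H : IsGKS μ f h) :
    ∀ r : ℕ, IsGKS μ f (h ^ r)
  | 0 => by simpa using isGKS_one hf₀ horth
  | r + 1 => by simpa [pow_succ] using (H.pow hcard hf₀ horth hGKS r).mul hcard horth hGKS H

end GKS

theorem tendsto_pow_two_mul_add_one {t : ℝ} (ht : |t| ≤ 1) (ht₁ : t ≠ 1) :
    Tendsto (fun k : ℕ => t ^ (2 * k + 1)) atTop (𝓝 (if t = -1 then -1 else 0)) := by
  split_ifs with h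
  · subst h
    simp_rw [Odd.neg_one_pow (odd_two_mul_add_one _)]
    exact tendsto_const_nhds
  · have hlt : |t| < 1 := lt_of_le_of_ne ht fun h' => by
      rcases abs_eq_abs.mp (h'.trans abs_one.symm) with h'' | h'' <;> contradiction
    exact (tendsto_pow_atTop_nhds_zero_of_abs_lt_one hlt).comp
      (tendsto_atTop_mono (fun k => show k ≤ 2 * k + 1 by omega) tendsto_id)

theorem exists_eq_of_isGreatest_abs_of_odd_moments_nonneg {E : Type*} [Fintype E] {μ : E → ℝ}
    (hμ : ∀ x, 0 < μ x) {g : E → ℝ} (hmom : ∀ k : ℕ, 0 ≤ ∑ x, μ x * g x ^ (2 * k + 1)) {m : ℝ}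
    (hm : IsGreatest (Set.range fun x => |g x|) m) : ∃ x, g x = m := by
  by_contra! hne
  obtain ⟨x₀, hx₀ : |g x₀| = m⟩ := hm.1
  have hm_nonneg : 0 ≤ m := hx₀ ▸ abs_nonneg _
  have hgx₀ : g x₀ = -m := ((abs_eq hm_nonneg).mp hx₀).resolve_left (hne x₀)
  have hm₀ : 0 < m := hm_nonneg.lt_of_ne fun h => hne x₀ (by rw [hgx₀, ← h, neg_zero])
  have hbound : ∀ x, |g x / m| ≤ 1 := fun x => by
    rw [abs_div, abs_of_pos hm₀, div_le_one hm₀]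
    exact hm.2 ⟨x, rfl⟩
  have hne_one : ∀ x, g x / m ≠ 1 := fun x h => hne x (by field_simp at h; exact h)
  have hlim : Tendsto (fun k : ℕ => ∑ x, μ x * (g x / m) ^ (2 * k + 1)) atTop
      (𝓝 (∑ x, μ x * if g x / m = -1 then -1 else 0)) :=
    tendsto_finsetSum _ fun x _ =>
      (tendsto_pow_two_mul_add_one (hbound x) (hne_one x)).const_mul (μ x)
  have hnonneg : ∀ k : ℕ, 0 ≤ ∑ x, μ x * (g x / m) ^ (2 * k + 1) := fun k => by
    simp_rw [div_pow, ← mul_div_assoc, ← Finset.sum_div]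
    exact div_nonneg (hmom k) (by positivity)
  have hneg : ∑ x, μ x * (if g x / m = -1 then -1 else 0) < 0 := by
    refine Finset.sum_neg' (fun x _ => ?_) ⟨x₀, Finset.mem_univ _, ?_⟩
    · split_ifs <;> nlinarith [hμ x]
    · rw [if_pos (by rw [hgx₀, neg_div, div_self hm₀.ne'])]
      linarith [hμ x₀]
  linarith [ge_of_tendsto' hlim hnonneg]

theorem stmt3_general {E : Type*} [Fintype E] (n : ℕ)
    (μ : E → ℝ) (f : Fin (n + 1) → E → ℝ)
    (hcard : Fintype.card E = n + 1)
    (hμpos : ∀ x, 0 < μ x)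
    (hf0 : ∀ x, f 0 x = 1)
    (horth : ∀ i j, ∑ x, μ x * f i x * f j x = if i = j then (1 : ℝ) else 0)
    (hGKS : ∀ i j k, 0 ≤ ∑ x, μ x * f i x * f j x * f k x)
    (g : E → ℝ) (hg : ∀ i, 0 ≤ ∑ x, μ x * g x * f i x)
    (m : ℝ) (hm : IsGreatest (Set.range fun x => |g x|) m) :
    ∃ x, g x = m := by
  have hcard' : Fintype.card E = Fintype.card (Fin (n + 1)) := by rw [hcard, Fintype.card_fin]
  have hpow : ∀ r : ℕ, IsGKS μ f (g ^ r) := (show IsGKS μ f g from hg).pow hcard' hf0 horth hGKS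
  refine exists_eq_of_isGreatest_abs_of_odd_moments_nonneg hμpos (fun k => ?_) hm
  simpa [hf0] using hpow (2 * k + 1) 0

/-- For a nonzero GKS function `g` on a finite set with a GKS basis, the
maximum `m` of `|g|` is attained at a point where `g` equals `m`: the set
`{x : g x = m}` is nonempty. -/
theorem stmt3 {E : Type*} [Fintype E] [Nonempty E] (n : ℕ)
    (μ : E → ℝ) (f : Fin (n + 1) → E → ℝ)
    (hcard : Fintype.card E = n + 1)
    (hμpos : ∀ x, 0 < μ x) (hμsum : ∑ x, μ x = 1)
    (hf0 : ∀ x, f 0 x = 1)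
    (horth : ∀ i j, ∑ x, μ x * f i x * f j x = if i = j then (1 : ℝ) else 0)
    (hGKS : ∀ i j k, 0 ≤ ∑ x, μ x * f i x * f j x * f k x)
    (g : E → ℝ) (hg : ∀ i, 0 ≤ ∑ x, μ x * g x * f i x)
    (hg0 : ∃ x, g x ≠ 0)
    (m : ℝ) (hm : IsGreatest (Set.range fun x => |g x|) m) :
    ∃ x, g x = m :=
  stmt3_general n μ f hcard hμpos hf0 horth hGKS g hg m hm
end

section
/- There is a bijective correspondence between pairs (finite probability space with everywhere positive weights, unitary orthonormal basis with f_0 = 1) on a set of n+1 points, and (n+1)×(n+1) real orthogonal matrices with strictly positive first column, given by O_{ij} = sqrt(μ(x_i)) f_j(x_i), with μ(x_i) = O_{i0}^2. -/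
/-- The data of a probability measure with everywhere positive weights on `Fin (n+1)`
together with a unitary orthonormal basis (first function constant equal to 1). -/
abbrev UOBData (n : ℕ) : Type :=
  { p : (Fin (n + 1) → ℝ) × (Fin (n + 1) → Fin (n + 1) → ℝ) //
      (∀ i, 0 < p.1 i) ∧ (∑ i, p.1 i = 1) ∧ (∀ i, p.2 0 i = 1) ∧
      (∀ j k, ∑ i, p.1 i * p.2 j i * p.2 k i = if j = k then (1 : ℝ) else 0) }

/-- Orthogonal `(n+1) × (n+1)` real matrices with strictly positive first column. -/
abbrev OrthPosData (n : ℕ) : Type :=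
  { O : Matrix (Fin (n + 1)) (Fin (n + 1)) ℝ //
      O ∈ Matrix.orthogonalGroup (Fin (n + 1)) ℝ ∧ ∀ i, 0 < O i 0 }

lemma orth_col {n : ℕ} {O : Matrix (Fin (n+1)) (Fin (n+1)) ℝ}
    (hO : O ∈ Matrix.orthogonalGroup (Fin (n+1)) ℝ) (j k : Fin (n+1)) :
    ∑ i, O i j * O i k = if j = k then (1:ℝ) else 0 := by
  have h := (Matrix.mem_orthogonalGroup_iff' _ _).mp hO
  have := congrFun (congrFun h j) k
  simpa [Matrix.mul_apply, Matrix.one_apply, Matrix.transpose_apply, mul_comm] using this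

noncomputable def toO (n : ℕ) (p : UOBData n) : OrthPosData n :=
  ⟨Matrix.of fun i j => Real.sqrt (p.1.1 i) * p.1.2 j i, by
    obtain ⟨⟨μ, f⟩, hpos, hsum, hf0, horth⟩ := p
    rw [Matrix.mem_orthogonalGroup_iff']
    ext j k
    simp only [Matrix.mul_apply, Matrix.star_apply, Matrix.transpose_apply, Matrix.of_apply,
      star_trivial, Matrix.one_apply]
    rw [← horth j k]
    apply Finset.sum_congr rfl
    intro i _
    ring_nf
    rw [Real.sq_sqrt (hpos i).le]
    ring, by
    intro i
    simp only [Matrix.of_apply, p.2.2.2.1, mul_one]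
    exact Real.sqrt_pos.mpr (p.2.1 i)⟩

noncomputable def toP (n : ℕ) (O : OrthPosData n) : UOBData n :=
  ⟨(fun i => (O.1 i 0) ^ 2, fun j i => O.1 i j / O.1 i 0), fun i => pow_pos (O.2.2 i) 2, by
    simpa [sq] using orth_col O.2.1 0 0, fun i => div_self (O.2.2 i).ne', by
    intro j k
    rw [← orth_col O.2.1 j k]
    apply Finset.sum_congr rfl
    intro i _
    have h0 : O.1 i 0 ≠ 0 := (O.2.2 i).ne'
    field_simp⟩

/-- The map `(μ, f) ↦ O` with `O i j = √(μ i) * f j i` is a bijective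
correspondence between finite probability spaces on `n+1` points with everywhere
positive weights endowed with a unitary orthonormal basis, and `(n+1) × (n+1)` real
orthogonal matrices with strictly positive first column; the inverse recovers the
measure as `μ i = (O i 0)²`. -/
theorem stmt4 (n : ℕ) :
    ∃ F : UOBData n ≃ OrthPosData n,
      (∀ p : UOBData n,
        (F p).1 = Matrix.of fun i j => Real.sqrt (p.1.1 i) * p.1.2 j i) ∧
      (∀ O : OrthPosData n, ∀ i, (F.symm O).1.1 i = (O.1 i 0) ^ 2) := by
  refine ⟨⟨toO n, toP n, ?_, ?_⟩, fun p => rfl, fun O i => rfl⟩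
  · rintro ⟨⟨μ, f⟩, hpos, hsum, hf0, horth⟩
    have hf0' : ∀ i, f 0 i = 1 := hf0
    have hpos' : ∀ i, 0 < μ i := hpos
    apply Subtype.ext
    simp only [toO, toP]
    refine Prod.ext ?_ ?_
    · funext i
      simp only [Matrix.of_apply, hf0', mul_one]
      exact Real.sq_sqrt (hpos' i).le
    · funext j i
      simp only [Matrix.of_apply, hf0', mul_one]
      rw [mul_comm, mul_div_assoc, div_self (Real.sqrt_pos.mpr (hpos' i)).ne', mul_one]
  · rintro ⟨O, hO, hpos⟩
    apply Subtype.ext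
    simp only [toO, toP]
    ext i j
    simp only [Matrix.of_apply]
    rw [Real.sqrt_sq (hpos i).le, mul_div_cancel₀ _ (hpos i).ne']
end

section
/- If a Hadamard matrix of order n+1 ≥ 2 has the GKS property (viewing its normalized columns as an orthonormal basis for the uniform measure), then n+1 is a power of 2. -/
/-!
Write `f i` for the `i`-th column. The rows are orthogonal as well, so `f i * f j` expands in
the columns with coefficients `c k = ∑ x, f i x * f j x * f k x`. These are nonnegative by the
GKS property, they sum to `n + 1` (read off at the all-ones row) and their squares sum to
`(n + 1) ^ 2` (Parseval). Hence some `c k` equals `n + 1`, that is `f i * f j = f k`. So the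
columns form a group of exponent two under pointwise multiplication, and its order `n + 1` is a
power of two.
-/

open Finset Matrix

theorem exists_card_eq_two_pow_of_mul_self_eq_one {M : Type*} [Monoid M] [Finite M]
    (h : ∀ a : M, a * a = 1) : ∃ k, Nat.card M = 2 ^ k := by
  have hunits : Function.Bijective (Units.val : Mˣ → M) :=
    ⟨Units.val_injective, fun a => ⟨⟨a, a, h a, h a⟩, rfl⟩⟩
  have : Fact (Nat.Prime 2) := ⟨Nat.prime_two⟩
  rw [← Nat.card_congr (Equiv.ofBijective _ hunits)]
  exact IsPGroup.iff_card.mp fun u => ⟨1, Units.ext <| by simpa [pow_two] using h u⟩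

theorem Set.exists_card_eq_two_pow_of_mul_self_eq_one {M : Type*} [Monoid M] {s : Set M}
    (hs : s.Finite) (hne : s.Nonempty) (hmul : ∀ a ∈ s, ∀ b ∈ s, a * b ∈ s)
    (hsq : ∀ a ∈ s, a * a = 1) : ∃ k, Nat.card s = 2 ^ k := by
  obtain ⟨a, ha⟩ := hne
  let S : Submonoid M := ⟨⟨s, fun hx hy => hmul _ hx _ hy⟩, hsq a ha ▸ hmul a ha a ha⟩
  have : Finite S := by exact hs.to_subtype
  exact _root_.exists_card_eq_two_pow_of_mul_self_eq_one (M := S) fun x => by ext; exact hsq x x.2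

theorem exists_eq_of_sum_eq_of_sum_sq_eq {ι : Type*} [Fintype ι] {c : ι → ℝ} {s : ℝ}
    (hs : s ≠ 0) (hc : ∀ k, 0 ≤ c k) (hsum : ∑ k, c k = s) (hsq : ∑ k, c k ^ 2 = s ^ 2) :
    ∃ k, c k = s := by
  have hle : ∀ k, c k ≤ s := fun k => hsum ▸ single_le_sum (fun k _ => hc k) (mem_univ k)
  have hzero : ∑ k, c k * (s - c k) = 0 := by
    simp only [mul_sub, sum_sub_distrib, ← sum_mul, hsum, ← sq, hsq, sub_self]
  have hterm :=
    (sum_eq_zero_iff_of_nonneg fun k _ => mul_nonneg (hc k) (sub_nonneg.2 (hle k))).1 hzero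
  by_contra! hne
  refine hs (hsum ▸ sum_eq_zero fun k _ => ?_)
  simpa [sub_ne_zero.2 (hne k).symm] using hterm k (mem_univ k)

theorem eq_of_sum_mul_eq_card {ι : Type*} [Fintype ι] {f g : ι → ℝ}
    (hf : ∀ x, f x = 1 ∨ f x = -1) (hg : ∀ x, g x = 1 ∨ g x = -1)
    (h : ∑ x, f x * g x = Fintype.card ι) : f = g := by
  have hle : ∀ x, f x * g x ≤ 1 := fun x => by
    rcases hf x with hx | hx <;> rcases hg x with hy | hy <;> norm_num [hx, hy]
  have hzero : ∑ x, (1 - f x * g x) = 0 := by simp [sum_sub_distrib, h]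
  funext x
  have hx := (sum_eq_zero_iff_of_nonneg fun x _ => sub_nonneg.2 (hle x)).1 hzero x (mem_univ x)
  rcases hf x with hfx | hfx <;> rcases hg x with hgx | hgx <;> simp only [hfx, hgx] at hx ⊢ <;>
    norm_num at hx

namespace Matrix

variable {m n R : Type*}

theorem mul_transpose_eq_smul_one_of_transpose_mul {K : Type*} [Field K] [Fintype n]
    [DecidableEq n] {A : Matrix n n K} {c : K} (hc : c ≠ 0) (h : Aᵀ * A = c • 1) :
    A * Aᵀ = c • 1 := by
  have hinv : A * (c⁻¹ • Aᵀ) = 1 :=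
    mul_eq_one_comm.mp <| by rw [smul_mul, h, smul_smul, inv_mul_cancel₀ hc, one_smul]
  rwa [Matrix.mul_smul, inv_smul_eq_iff₀ hc] at hinv

theorem transpose_mul_self_eq_card_smul_one [Fintype m] [DecidableEq n] {A : Matrix m n ℝ}
    (hA : ∀ x i, A x i = 1 ∨ A x i = -1) (horth : ∀ i j, i ≠ j → ∑ x, A x i * A x j = 0) :
    Aᵀ * A = (Fintype.card m : ℝ) • 1 := by
  ext i j
  rcases eq_or_ne i j with rfl | hij
  · simp [mul_apply, mul_self_eq_one_iff.mpr (hA _ i)]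
  · simp [mul_apply, horth i j hij, hij]

theorem injective_transpose_of_transpose_mul_eq_smul_one [Semiring R] [Fintype m]
    [DecidableEq n] {A : Matrix m n R} {c : R} (hc : c ≠ 0) (h : Aᵀ * A = c • 1) :
    Function.Injective Aᵀ := by
  intro i j hij
  have hii : (Aᵀ * A) i j = (Aᵀ * A) i i := by
    simp only [mul_apply, transpose_apply]
    exact sum_congr rfl fun x _ => by rw [← transpose_apply A j x, ← hij, transpose_apply]
  by_contra hne
  simp [h, hne] at hii
  exact hc hii.symm

theorem sum_vecMul_sq [CommSemiring R] [Fintype m] [Fintype n] [DecidableEq m]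
    {A : Matrix m n R} {c : R} (h : A * Aᵀ = c • 1) (g : m → R) :
    ∑ k, (g ᵥ* A) k ^ 2 = c * ∑ x, g x ^ 2 := by
  simp only [sq]
  change (g ᵥ* A) ⬝ᵥ (g ᵥ* A) = c * (g ⬝ᵥ g)
  rw [dotProduct_comm, ← dotProduct_mulVec, ← vecMul_transpose, vecMul_vecMul, h,
    vecMul_smul, vecMul_one, dotProduct_smul, smul_eq_mul, dotProduct_comm]

theorem sum_vecMul_of_row_eq_one [CommSemiring R] [Fintype m] [Fintype n] [DecidableEq m]
    {A : Matrix m n R} {c : R} (h : A * Aᵀ = c • 1) {o : m} (ho : ∀ i, A o i = 1) (g : m → R) :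
    ∑ k, (g ᵥ* A) k = c * g o := by
  have hrow : ∀ x, ∑ k, A x k = c * (1 : Matrix m m R) x o := fun x => by
    simpa [mul_apply, ho] using congrFun (congrFun h x) o
  calc ∑ k, (g ᵥ* A) k = ∑ x, g x * ∑ k, A x k := by
        simp only [vecMul, dotProduct, mul_sum]
        exact sum_comm
    _ = c * g o := by simp [hrow, one_apply, mul_comm]

theorem transpose_mul_transpose_mem_range [Fintype m] [DecidableEq m] {A : Matrix m m ℝ}
    (hA : ∀ x i, A x i = 1 ∨ A x i = -1) (h : A * Aᵀ = (Fintype.card m : ℝ) • 1)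
    {o : m} (ho : ∀ i, A o i = 1) (hGKS : ∀ i j k, 0 ≤ ∑ x, A x i * A x j * A x k) (i j : m) :
    Aᵀ i * Aᵀ j ∈ Set.range Aᵀ := by
  set g := Aᵀ i * Aᵀ j
  have hg : ∀ x, g x = 1 ∨ g x = -1 := fun x => by
    rcases hA x i with hi | hi <;> rcases hA x j with hj | hj <;> simp [g, hi, hj]
  have hgg : ∑ x, g x ^ 2 = Fintype.card m := by
    simp [sq, mul_self_eq_one_iff.mpr (hg _)]
  have : Nonempty m := ⟨o⟩
  -- `g ᵥ* A` is `card m` times the coordinate vector of `g` in the basis of columns.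
  obtain ⟨k, hk⟩ := exists_eq_of_sum_eq_of_sum_sq_eq (c := g ᵥ* A) (s := Fintype.card m)
    (Nat.cast_ne_zero.mpr Fintype.card_ne_zero)
    (fun k => hGKS i j k)
    (by simp [sum_vecMul_of_row_eq_one h ho, g, ho])
    (by rw [sum_vecMul_sq h, hgg, sq])
  refine ⟨k, eq_of_sum_mul_eq_card (hA · k) hg ?_⟩
  rw [← hk]
  exact sum_congr rfl fun x _ => mul_comm _ _

end Matrix

theorem stmt6_general (n : ℕ)
    (H : Matrix (Fin (n + 1)) (Fin (n + 1)) ℝ)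
    (hentries : ∀ x i, H x i = 1 ∨ H x i = -1)
    (hcolorth : ∀ i j, i ≠ j → ∑ x, H x i * H x j = 0)
    (hrow0 : ∀ i, H 0 i = 1)
    (hGKS : ∀ i j k, 0 ≤ ∑ x, H x i * H x j * H x k) :
    ∃ k : ℕ, n + 1 = 2 ^ k := by
  have hHtH := transpose_mul_self_eq_card_smul_one hentries hcolorth
  have hHHt := mul_transpose_eq_smul_one_of_transpose_mul (by positivity) hHtH
  obtain ⟨k, hk⟩ := Set.exists_card_eq_two_pow_of_mul_self_eq_one (Set.finite_range Hᵀ)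
    (Set.range_nonempty _)
    (by
      rintro _ ⟨i, rfl⟩ _ ⟨j, rfl⟩
      exact transpose_mul_transpose_mem_range hentries hHHt hrow0 hGKS i j)
    (by rintro _ ⟨i, rfl⟩; funext x; exact mul_self_eq_one_iff.mpr (hentries x i))
  refine ⟨k, ?_⟩
  rwa [Nat.card_range_of_injective (injective_transpose_of_transpose_mul_eq_smul_one
    (by positivity) hHtH), Nat.card_fin] at hk

/-- If a Hadamard matrix `H` of order `n+1 ≥ 2` (entries `±1`, pairwise
orthogonal columns, first row and first column consisting of `+1`) has the GKS property
— i.e. all averaged triple products of its columns are nonnegative — then `n+1` is a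
power of `2`. -/
theorem stmt6 (n : ℕ) (hn : 2 ≤ n + 1)
    (H : Matrix (Fin (n + 1)) (Fin (n + 1)) ℝ)
    (hentries : ∀ x i, H x i = 1 ∨ H x i = -1)
    (hcolorth : ∀ i j, i ≠ j → ∑ x, H x i * H x j = 0)
    (hrow0 : ∀ i, H 0 i = 1) (hcol0 : ∀ x, H x 0 = 1)
    (hGKS : ∀ i j k, 0 ≤ ∑ x, H x i * H x j * H x k) :
    ∃ k : ℕ, n + 1 = 2 ^ k :=
  stmt6_general n H hentries hcolorth hrow0 hGKS
end

section
/- On a finite probability space with a unitary orthonormal basis F having the hypergroup property at x_0 (with f_i(x_0) > 0 for all i), one has |f_i(x)| ≤ f_i(x_0) for all i and x, and μ(x) ≥ μ(x_0) for all x. -/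
open Matrix


/-- If a real unitary orthonormal basis `f` on a finite probability space
has the hypergroup property at `x₀` (with `f i x₀ > 0` for all `i`), then
`|f i x| ≤ f i x₀` for all `i, x`, and `μ x ≥ μ x₀` for all `x`. -/
theorem stmt7 {E : Type*} [Fintype E] [Nonempty E] (n : ℕ)
    (μ : E → ℝ) (f : Fin (n + 1) → E → ℝ)
    (hcard : Fintype.card E = n + 1)
    (hμpos : ∀ x, 0 < μ x) (hμsum : ∑ x, μ x = 1)
    (hf0 : ∀ x, f 0 x = 1)
    (horth : ∀ i j, ∑ x, μ x * f i x * f j x = if i = j then (1 : ℝ) else 0)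
    (x₀ : E) (hpos : ∀ i, 0 < f i x₀)
    (hHGP : ∀ x y z, 0 ≤ ∑ i, f i x * f i y * f i z / f i x₀) :
    (∀ i x, |f i x| ≤ f i x₀) ∧ (∀ x, μ x₀ ≤ μ x) := by
  have hfx₀ne : ∀ i, f i x₀ ≠ 0 := fun i => (hpos i).ne'
  -- dual orthogonality (diagonal): ∑ i, (f i x)^2 = 1 / μ x
  have hA : ∀ x, ∑ i, f i x ^ 2 = 1 / μ x := by
    intro x
    let e := Fintype.equivFinOfCardEq hcard
    set M : Matrix (Fin (n+1)) (Fin (n+1)) ℝ :=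
      fun i k => Real.sqrt (μ (e.symm k)) * f i (e.symm k) with hM
    have hMMT : M * Mᵀ = 1 := by
      ext i j
      simp only [Matrix.mul_apply, Matrix.transpose_apply, Matrix.one_apply]
      simp only [hM]
      rw [← horth i j, ← Equiv.sum_comp e.symm fun y => μ y * f i y * f j y]
      apply Finset.sum_congr rfl
      intro k _
      have hs : Real.sqrt (μ (e.symm k)) * Real.sqrt (μ (e.symm k)) = μ (e.symm k) :=
        Real.mul_self_sqrt (hμpos _).le
      linear_combination (f i (e.symm k) * f j (e.symm k)) * hs
    have hMTM : Mᵀ * M = 1 := mul_eq_one_comm.mp hMMT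
    have h1 : ∑ i, (Real.sqrt (μ x) * f i x) * (Real.sqrt (μ x) * f i x) = 1 := by
      have := congrFun (congrFun hMTM (e x)) (e x)
      simp only [Matrix.mul_apply, Matrix.transpose_apply, Matrix.one_apply] at this
      simpa [hM] using this
    have hs : Real.sqrt (μ x) * Real.sqrt (μ x) = μ x := Real.mul_self_sqrt (hμpos x).le
    have h2 : μ x * ∑ i, f i x ^ 2 = 1 := by
      rw [Finset.mul_sum, ← h1]
      apply Finset.sum_congr rfl
      intro i _
      linear_combination (-(f i x ^ 2)) * hs
    rw [eq_div_iff (hμpos x).ne']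
    linarith [h2]
  -- eigen-equation
  have hB : ∀ (j : Fin (n+1)) (x y : E),
      ∑ z, μ z * (∑ i, f i x * f i y * f i z / f i x₀) * f j z
        = f j x * f j y / f j x₀ := by
    intro j x y
    have hrw : ∀ z, μ z * (∑ i, f i x * f i y * f i z / f i x₀) * f j z
        = ∑ i, (f i x * f i y / f i x₀) * (μ z * f i z * f j z) := by
      intro z
      rw [Finset.mul_sum, Finset.sum_mul]
      apply Finset.sum_congr rfl
      intro i _
      field_simp
    simp_rw [hrw]
    rw [Finset.sum_comm]
    have h2 : ∀ i : Fin (n+1), ∑ z, (f i x * f i y / f i x₀) * (μ z * f i z * f j z)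
        = (f i x * f i y / f i x₀) * (if i = j then 1 else 0) := by
      intro i
      rw [← Finset.mul_sum, horth i j]
    simp_rw [h2]
    simp
  -- stochasticity: row sums equal 1
  have hC : ∀ x y, ∑ z, μ z * (∑ i, f i x * f i y * f i z / f i x₀) = 1 := by
    intro x y
    have := hB 0 x y
    simp only [hf0] at this
    simpa using this
  constructor
  · intro j x
    obtain ⟨w, -, hw⟩ := Finset.exists_max_image Finset.univ (fun y => |f j y|)
      ⟨Classical.arbitrary E, Finset.mem_univ _⟩
    have hw' : ∀ z, |f j z| ≤ |f j w| := fun z => hw z (Finset.mem_univ z)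
    have hwne : 0 < |f j w| := by
      rcases lt_or_ge 0 (|f j w|) with h | h
      · exact h
      · exfalso
        have hz : ∀ z, f j z = 0 := by
          intro z
          have := hw' z
          have : |f j z| ≤ 0 := le_trans this h
          simpa [abs_nonpos_iff] using this
        have := horth j j
        simp [hz] at this
    have hKnn : ∀ z, 0 ≤ μ z * (∑ i, f i x * f i w * f i z / f i x₀) :=
      fun z => mul_nonneg (hμpos z).le (hHGP x w z)
    have key : |f j x * f j w / f j x₀| ≤ |f j w| := by
      rw [← hB j x w]
      calc |∑ z, μ z * (∑ i, f i x * f i w * f i z / f i x₀) * f j z|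
          ≤ ∑ z, |μ z * (∑ i, f i x * f i w * f i z / f i x₀) * f j z| :=
            Finset.abs_sum_le_sum_abs _ _
        _ = ∑ z, μ z * (∑ i, f i x * f i w * f i z / f i x₀) * |f j z| := by
            apply Finset.sum_congr rfl
            intro z _
            rw [abs_mul, abs_of_nonneg (hKnn z)]
        _ ≤ ∑ z, μ z * (∑ i, f i x * f i w * f i z / f i x₀) * |f j w| := by
            apply Finset.sum_le_sum
            intro z _
            exact mul_le_mul_of_nonneg_left (hw' z) (hKnn z)
        _ = |f j w| := by rw [← Finset.sum_mul, hC x w, one_mul]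
    have habs : |f j x * f j w / f j x₀| = |f j x| * |f j w| / f j x₀ := by
      rw [abs_div, abs_mul, abs_of_pos (hpos j)]
    rw [habs] at key
    have : |f j x| * |f j w| ≤ f j x₀ * |f j w| := by
      rw [div_le_iff₀ (hpos j)] at key
      linarith [key]
    exact le_of_mul_le_mul_right this hwne
  · intro x
    have hKnn : ∀ z, 0 ≤ μ z * (∑ i, f i x * f i x * f i z / f i x₀) :=
      fun z => mul_nonneg (hμpos z).le (hHGP x x z)
    have hsingle : μ x₀ * (∑ i, f i x * f i x * f i x₀ / f i x₀) ≤ 1 := by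
      rw [← hC x x]
      exact Finset.single_le_sum (fun z _ => hKnn z) (Finset.mem_univ x₀)
    have hKval : (∑ i, f i x * f i x * f i x₀ / f i x₀) = 1 / μ x := by
      rw [← hA x]
      apply Finset.sum_congr rfl
      intro i _
      rw [mul_div_assoc, div_self (hfx₀ne i)]
      ring
    rw [hKval] at hsingle
    have hx := hμpos x
    rw [mul_one_div, div_le_one hx] at hsingle
    exact hsingle
end

section
/- If the basis F has the hypergroup property at x_0, then every Markov sequence (λ_i) (i.e., sequence such that the operator K(f_i) = λ_i f_i is a Markov operator) can be written as λ_i = ∫ f_i(x)/f_i(x_0) dν(x) for some probability measure ν on E, and conversely every probability measure ν yields a Markov sequence this way. -/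
/-!
A Markov operator `K`, evaluated at `x₀`, is integration against the probability weights
`ν y = K δ_y (x₀)`; applied to the eigenfunctions this gives `l i f i x₀ = ∑ y, ν y f i y`.
Conversely, given `ν`, the operator with eigenvalues `l` has kernel
`μ y ∑ i l i f i x f i y = μ y ∑ z ν z ∑ i f i x f i y f i z / f i x₀`,
which is nonnegative by the hypergroup property, so it is a Markov operator.
-/

open Finset Matrix

section

variable {E : Type*} [Fintype E]

theorem exists_probability_weights_of_markov (K : (E → ℝ) →ₗ[ℝ] (E → ℝ))
    (hK1 : (K fun _ => 1) = fun _ => 1)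
    (hKpos : ∀ g : E → ℝ, (∀ x, 0 ≤ g x) → ∀ x, 0 ≤ K g x) (x₀ : E) :
    ∃ ν : E → ℝ, (∀ y, 0 ≤ ν y) ∧ ∑ y, ν y = 1 ∧ ∀ g, K g x₀ = ∑ y, ν y * g y := by
  classical
  have hK : ∀ g, K g x₀ = ∑ y, K (fun z => if y = z then 1 else 0) x₀ * g y := fun g => by
    rw [LinearMap.pi_apply_eq_sum_univ K g, Finset.sum_apply]
    exact Finset.sum_congr rfl fun y _ => by rw [Pi.smul_apply, smul_eq_mul, mul_comm]
  refine ⟨fun y => K (fun z => if y = z then 1 else 0) x₀, fun y => ?_, ?_, hK⟩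
  · exact hKpos _ (fun z => by split_ifs <;> norm_num) x₀
  · simpa [hK1] using (hK fun _ => 1).symm

variable {ι : Type*} [Fintype ι]

/-- The kernel, with respect to counting measure, of the operator `f i ↦ l i • f i`. -/
def multiplierKernel (μ : E → ℝ) (f : ι → E → ℝ) (l : ι → ℝ) : Matrix E E ℝ :=
  Matrix.of fun x y => ∑ i, l i * f i x * f i y * μ y

theorem multiplierKernel_mulVec [DecidableEq ι] {μ : E → ℝ} {f : ι → E → ℝ}
    (horth : ∀ i j, ∑ x, μ x * f i x * f j x = if i = j then (1 : ℝ) else 0)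
    (l : ι → ℝ) (j : ι) : multiplierKernel μ f l *ᵥ f j = l j • f j := by
  funext x
  calc (multiplierKernel μ f l *ᵥ f j) x
      = ∑ i, l i * f i x * ∑ y, μ y * f i y * f j y := by
        simp only [mulVec, dotProduct, multiplierKernel, of_apply, Finset.sum_mul,
          Finset.mul_sum]
        rw [Finset.sum_comm]
        exact Finset.sum_congr rfl fun i _ => Finset.sum_congr rfl fun y _ => by ring
    _ = (l j • f j) x := by simp [horth]

theorem multiplierKernel_nonneg {μ : E → ℝ} (hμ : ∀ x, 0 ≤ μ x) {f : ι → E → ℝ} {x₀ : E}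
    (hHGP : ∀ x y z, 0 ≤ ∑ i, f i x * f i y * f i z / f i x₀)
    {ν : E → ℝ} (hν : ∀ z, 0 ≤ ν z) {l : ι → ℝ}
    (hl : ∀ i, l i = ∑ z, ν z * (f i z / f i x₀)) (x y : E) :
    0 ≤ multiplierKernel μ f l x y := by
  have hk : multiplierKernel μ f l x y
      = μ y * ∑ z, ν z * ∑ i, f i x * f i y * f i z / f i x₀ := by
    simp only [multiplierKernel, of_apply, hl, Finset.sum_mul, Finset.mul_sum]
    rw [Finset.sum_comm]
    exact Finset.sum_congr rfl fun z _ => Finset.sum_congr rfl fun i _ => by ring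
  rw [hk]
  exact mul_nonneg (hμ y) (Finset.sum_nonneg fun z _ => mul_nonneg (hν z) (hHGP x y z))

end

theorem stmt9_general {E : Type*} [Fintype E] (n : ℕ)
    (μ : E → ℝ) (f : Fin (n + 1) → E → ℝ)
    (hμpos : ∀ x, 0 < μ x)
    (hf0 : ∀ x, f 0 x = 1)
    (horth : ∀ i j, ∑ x, μ x * f i x * f j x = if i = j then (1 : ℝ) else 0)
    (x₀ : E) (hpos : ∀ i, 0 < f i x₀)
    (hHGP : ∀ x y z, 0 ≤ ∑ i, f i x * f i y * f i z / f i x₀)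
    (l : Fin (n + 1) → ℝ) :
    (∃ K : (E → ℝ) →ₗ[ℝ] (E → ℝ),
        (K fun _ => 1) = (fun _ => 1) ∧
        (∀ g : E → ℝ, (∀ x, 0 ≤ g x) → ∀ x, 0 ≤ K g x) ∧
        (∀ i, K (f i) = l i • f i)) ↔
    (∃ ν : E → ℝ, (∀ x, 0 ≤ ν x) ∧ (∑ x, ν x = 1) ∧
        ∀ i, l i = ∑ x, ν x * (f i x / f i x₀)) := by
  constructor
  · rintro ⟨K, hK1, hKpos, hKf⟩
    obtain ⟨ν, hν0, hν1, hνK⟩ := exists_probability_weights_of_markov K hK1 hKpos x₀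
    refine ⟨ν, hν0, hν1, fun i => ?_⟩
    have hKfi : l i * f i x₀ = ∑ y, ν y * f i y := by
      rw [← hνK, hKf i, Pi.smul_apply, smul_eq_mul]
    simp only [mul_div_assoc', ← Finset.sum_div, ← hKfi, mul_div_cancel_right₀ _ (hpos i).ne']
  · rintro ⟨ν, hν0, hν1, hl⟩
    have hl0 : l 0 = 1 := by simpa [hf0, hν1] using hl 0
    have hf0' : f 0 = fun _ => 1 := funext hf0
    refine ⟨(multiplierKernel μ f l).mulVecLin, ?_, fun g hg x => ?_,
      multiplierKernel_mulVec horth l⟩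
    · rw [← hf0', mulVecLin_apply, multiplierKernel_mulVec horth, hl0, one_smul]
    · exact Finset.sum_nonneg fun y _ => mul_nonneg
        (multiplierKernel_nonneg (fun x => (hμpos x).le) hHGP hν0 hl x y) (hg y)

/-- If the basis `f` has the hypergroup property at `x₀`, then a sequence
`l` is a Markov sequence (i.e. there is a Markov operator `K` — linear, `K 1 = 1`,
preserving nonnegative functions — with `K (f i) = l i • f i` for all `i`) if and only
if `l i = ∑ x, ν x * (f i x / f i x₀)` for some probability measure `ν` on `E`. -/
theorem stmt9 {E : Type*} [Fintype E] [Nonempty E] (n : ℕ)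
    (μ : E → ℝ) (f : Fin (n + 1) → E → ℝ)
    (hcard : Fintype.card E = n + 1)
    (hμpos : ∀ x, 0 < μ x) (hμsum : ∑ x, μ x = 1)
    (hf0 : ∀ x, f 0 x = 1)
    (horth : ∀ i j, ∑ x, μ x * f i x * f j x = if i = j then (1 : ℝ) else 0)
    (x₀ : E) (hpos : ∀ i, 0 < f i x₀)
    (hHGP : ∀ x y z, 0 ≤ ∑ i, f i x * f i y * f i z / f i x₀)
    (l : Fin (n + 1) → ℝ) :
    (∃ K : (E → ℝ) →ₗ[ℝ] (E → ℝ),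
        (K fun _ => 1) = (fun _ => 1) ∧
        (∀ g : E → ℝ, (∀ x, 0 ≤ g x) → ∀ x, 0 ≤ K g x) ∧
        (∀ i, K (f i) = l i • f i)) ↔
    (∃ ν : E → ℝ, (∀ x, 0 ≤ ν x) ∧ (∑ x, ν x = 1) ∧
        ∀ i, l i = ∑ x, ν x * (f i x / f i x₀)) :=
  stmt9_general n μ f hμpos hf0 horth x₀ hpos hHGP l
end

section
/- The sequences λ_i(x) = f_i(x)/f_i(x_0), for x ∈ E, are the extremal points of the convex set of Markov sequences associated with a basis F having the hypergroup property at x_0. -/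
lemma sum_swap_mul {α β : Type*} [Fintype α] [Fintype β] (F : α → β → ℝ) (c : β → ℝ) :
    ∑ y, (∑ i, F i y) * c y = ∑ i, ∑ y, F i y * c y := by
  simp only [Finset.sum_mul]
  rw [Finset.sum_comm]

lemma dualorth {E : Type*} [Fintype E] [DecidableEq E] (n : ℕ) (μ : E → ℝ) (f : Fin (n + 1) → E → ℝ)
    (hcard : Fintype.card E = n + 1) (hμpos : ∀ x, 0 < μ x)
    (horth : ∀ i j, ∑ x, μ x * f i x * f j x = if i = j then (1 : ℝ) else 0) :
    ∀ x y, ∑ i, f i x * f i y = if x = y then 1 / μ x else 0 := by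
  obtain ⟨e⟩ : Nonempty (Fin (n+1) ≃ E) := ⟨(Fintype.equivFinOfCardEq hcard).symm⟩
  set A : Matrix (Fin (n+1)) (Fin (n+1)) ℝ :=
    fun i j => Real.sqrt (μ (e j)) * f i (e j) with hA
  have hAAT : A * A.transpose = 1 := by
    ext i j
    simp only [Matrix.mul_apply, Matrix.transpose_apply, Matrix.one_apply]
    simp only [hA]
    have hterm : ∀ k, Real.sqrt (μ (e k)) * f i (e k) * (Real.sqrt (μ (e k)) * f j (e k))
        = μ (e k) * f i (e k) * f j (e k) := by
      intro k
      have h1 : Real.sqrt (μ (e k)) * f i (e k) * (Real.sqrt (μ (e k)) * f j (e k))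
          = (Real.sqrt (μ (e k)) * Real.sqrt (μ (e k))) * (f i (e k) * f j (e k)) := by ring
      rw [h1, Real.mul_self_sqrt (le_of_lt (hμpos (e k)))]; ring
    rw [Finset.sum_congr rfl (fun k _ => hterm k)]
    exact (Equiv.sum_comp e (fun x => μ x * f i x * f j x)).trans (horth i j)
  have hATA : A.transpose * A = 1 := mul_eq_one_comm.mp hAAT
  intro x y
  have key : Real.sqrt (μ x) * Real.sqrt (μ y) * ∑ i, f i x * f i y
      = if x = y then 1 else 0 := by
    have h2 := congrFun (congrFun hATA (e.symm x)) (e.symm y)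
    simp only [Matrix.mul_apply, Matrix.transpose_apply, Matrix.one_apply,
      Equiv.apply_symm_apply, e.symm.injective.eq_iff] at h2
    simp only [hA, Equiv.apply_symm_apply] at h2
    rw [← h2, Finset.mul_sum]
    exact Finset.sum_congr rfl (fun i _ => by ring)
  have hsx : (0:ℝ) < Real.sqrt (μ x) := Real.sqrt_pos.mpr (hμpos x)
  have hsy : (0:ℝ) < Real.sqrt (μ y) := Real.sqrt_pos.mpr (hμpos y)
  by_cases h : x = y
  · subst h
    rw [if_pos rfl] at key ⊢
    rw [Real.mul_self_sqrt (le_of_lt (hμpos x))] at key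
    have := hμpos x
    field_simp
    simp only [sq]
    linarith
  · rw [if_neg h] at key ⊢
    have hpos := mul_pos hsx hsy
    rcases mul_eq_zero.mp key with h1 | h1
    · linarith
    · exact h1

lemma markov_iff {E : Type*} [Fintype E] [Nonempty E] [DecidableEq E] (n : ℕ)
    (μ : E → ℝ) (f : Fin (n + 1) → E → ℝ)
    (hcard : Fintype.card E = n + 1)
    (hμpos : ∀ x, 0 < μ x)
    (hf0 : ∀ x, f 0 x = 1)
    (horth : ∀ i j, ∑ x, μ x * f i x * f j x = if i = j then (1 : ℝ) else 0)
    (l : Fin (n + 1) → ℝ) :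
    (∃ K : (E → ℝ) →ₗ[ℝ] (E → ℝ),
          (K fun _ => 1) = (fun _ => 1) ∧
          (∀ g : E → ℝ, (∀ x, 0 ≤ g x) → ∀ x, 0 ≤ K g x) ∧
          (∀ i, K (f i) = l i • f i)) ↔
    (l 0 = 1 ∧ ∀ x y, 0 ≤ ∑ i, l i * f i x * f i y) := by
  have hdual := dualorth n μ f hcard hμpos horth
  have hμ0 : ∀ i, ∑ y, μ y * f i y = if i = 0 then (1:ℝ) else 0 := by
    intro i
    rw [← horth i 0]
    exact Finset.sum_congr rfl (fun y _ => by rw [hf0 y]; ring)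
  constructor
  · rintro ⟨K, hK1, hKpos, hKf⟩
    have hfone : f 0 = fun _ => 1 := funext hf0
    constructor
    · have h0 := hKf 0
      rw [hfone, hK1] at h0
      have h1 := congrFun h0 (Classical.arbitrary E)
      simp only [Pi.smul_apply, smul_eq_mul, mul_one] at h1
      exact h1.symm
    · intro x y
      -- indicator at y expands in the basis
      have hdelta : (fun z => if z = y then (1:ℝ) else 0)
          = ∑ i, (μ y * f i y) • f i := by
        funext z
        simp only [Finset.sum_apply, Pi.smul_apply, smul_eq_mul]
        have h1 : ∑ i, μ y * f i y * f i z = μ y * ∑ i, f i z * f i y := by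
          rw [Finset.mul_sum]; exact Finset.sum_congr rfl (fun i _ => by ring)
        rw [h1, hdual z y]
        by_cases h : z = y
        · subst h; rw [if_pos rfl, if_pos rfl]; field_simp; rw [div_self (ne_of_gt (hμpos z))]
        · rw [if_neg h, if_neg h, mul_zero]
      have hKd : K (fun z => if z = y then (1:ℝ) else 0)
          = ∑ i, (μ y * f i y) • (l i • f i) := by
        rw [hdelta, map_sum]
        exact Finset.sum_congr rfl (fun i _ => by rw [map_smul, hKf i])
      have hpos2 : 0 ≤ ∑ i, μ y * f i y * (l i * f i x) := by
        have h3 := hKpos (fun z => if z = y then (1:ℝ) else 0)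
          (fun z => by by_cases h : z = y <;> simp [h]) x
        rw [hKd] at h3
        simpa [Finset.sum_apply, Pi.smul_apply, smul_eq_mul, mul_assoc] using h3
      have h4 : ∑ i, μ y * f i y * (l i * f i x) = μ y * ∑ i, l i * f i x * f i y := by
        rw [Finset.mul_sum]; exact Finset.sum_congr rfl (fun i _ => by ring)
      rw [h4] at hpos2
      nlinarith [hμpos y]
  · rintro ⟨hl0, hlpos⟩
    refine ⟨{ toFun := fun g x => ∑ y, (∑ i, l i * f i x * f i y) * (μ y * g y),
              map_add' := ?_, map_smul' := ?_ }, ?_, ?_, ?_⟩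
    · intro g h; funext x
      simp only [Pi.add_apply, mul_add, Finset.sum_add_distrib]
    · intro c g; funext x
      simp only [Pi.smul_apply, smul_eq_mul, RingHom.id_apply]
      rw [Finset.mul_sum]
      exact Finset.sum_congr rfl (fun y _ => by ring)
    · funext x
      simp only [LinearMap.coe_mk, AddHom.coe_mk]
      rw [sum_swap_mul (fun i y => l i * f i x * f i y) (fun y => μ y * 1)]
      have h5 : ∀ i, ∑ y, l i * f i x * f i y * (μ y * 1) = l i * f i x * (if i = 0 then 1 else 0) := by
        intro i
        rw [← hμ0 i, Finset.mul_sum]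
        exact Finset.sum_congr rfl (fun y _ => by ring)
      rw [Finset.sum_congr rfl (fun i _ => h5 i)]
      simp [Finset.sum_ite_eq', hl0, hf0]
    · intro g hg x
      simp only [LinearMap.coe_mk, AddHom.coe_mk]
      exact Finset.sum_nonneg fun y _ =>
        mul_nonneg (hlpos x y) (mul_nonneg (le_of_lt (hμpos y)) (hg y))
    · intro j
      funext x
      simp only [LinearMap.coe_mk, AddHom.coe_mk, Pi.smul_apply, smul_eq_mul]
      rw [sum_swap_mul (fun i y => l i * f i x * f i y) (fun y => μ y * f j y)]
      have h5 : ∀ i, ∑ y, l i * f i x * f i y * (μ y * f j y)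
          = l i * f i x * (if i = j then 1 else 0) := by
        intro i
        rw [← horth i j, Finset.mul_sum]
        exact Finset.sum_congr rfl (fun y _ => by ring)
      rw [Finset.sum_congr rfl (fun i _ => h5 i)]
      simp [Finset.sum_ite_eq']

/-- For a basis `f` with the hypergroup property at `x₀`, the sequences
`i ↦ f i x / f i x₀`, for `x ∈ E`, are exactly the extreme points of the convex set of
Markov sequences associated with `f`. -/
theorem stmt10 {E : Type*} [Fintype E] [Nonempty E] (n : ℕ)
    (μ : E → ℝ) (f : Fin (n + 1) → E → ℝ)
    (hcard : Fintype.card E = n + 1)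
    (hμpos : ∀ x, 0 < μ x) (hμsum : ∑ x, μ x = 1)
    (hf0 : ∀ x, f 0 x = 1)
    (horth : ∀ i j, ∑ x, μ x * f i x * f j x = if i = j then (1 : ℝ) else 0)
    (x₀ : E) (hpos : ∀ i, 0 < f i x₀)
    (hHGP : ∀ x y z, 0 ≤ ∑ i, f i x * f i y * f i z / f i x₀) :
    Set.extremePoints ℝ
      {l : Fin (n + 1) → ℝ |
        ∃ K : (E → ℝ) →ₗ[ℝ] (E → ℝ),
          (K fun _ => 1) = (fun _ => 1) ∧
          (∀ g : E → ℝ, (∀ x, 0 ≤ g x) → ∀ x, 0 ≤ K g x) ∧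
          (∀ i, K (f i) = l i • f i)} =
      Set.range (fun x : E => fun i => f i x / f i x₀) := by
  classical
  have hdual := dualorth n μ f hcard hμpos horth
  have hfx0 : ∀ i, f i x₀ ≠ 0 := fun i => ne_of_gt (hpos i)
  have hμ0 : ∀ i, ∑ y, μ y * f i y = if i = 0 then (1:ℝ) else 0 := by
    intro i
    rw [← horth i 0]
    exact Finset.sum_congr rfl (fun y _ => by rw [hf0 y]; ring)
  have hset : {l : Fin (n + 1) → ℝ |
        ∃ K : (E → ℝ) →ₗ[ℝ] (E → ℝ),
          (K fun _ => 1) = (fun _ => 1) ∧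
          (∀ g : E → ℝ, (∀ x, 0 ≤ g x) → ∀ x, 0 ≤ K g x) ∧
          (∀ i, K (f i) = l i • f i)}
      = {l : Fin (n + 1) → ℝ | l 0 = 1 ∧ ∀ x y, 0 ≤ ∑ i, l i * f i x * f i y} :=
    Set.ext (fun l => markov_iff n μ f hcard hμpos hf0 horth l)
  rw [hset]
  set S := {l : Fin (n + 1) → ℝ | l 0 = 1 ∧ ∀ x y, 0 ≤ ∑ i, l i * f i x * f i y} with hS
  set lam : E → (Fin (n + 1) → ℝ) := fun x i => f i x / f i x₀ with hlam
  -- each lam x belongs to S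
  have hlam_mem : ∀ x, lam x ∈ S := by
    intro x
    constructor
    · show f 0 x / f 0 x₀ = 1
      rw [hf0 x, hf0 x₀]; norm_num
    · intro a b
      have h1 : ∑ i, lam x i * f i a * f i b = ∑ i, f i a * f i b * f i x / f i x₀ :=
        Finset.sum_congr rfl (fun i _ => by show f i x / f i x₀ * f i a * f i b = _; ring)
      rw [h1]; exact hHGP a b x
  -- the representation map p
  set p : (Fin (n + 1) → ℝ) → E → ℝ :=
    fun l y => μ y * ∑ j, l j * f j x₀ * f j y with hp
  have hp_nonneg : ∀ l, l ∈ S → ∀ y, 0 ≤ p l y := by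
    intro l hl y
    have h1 : ∑ j, l j * f j x₀ * f j y = ∑ j, l j * f j x₀ * f j y := rfl
    exact mul_nonneg (le_of_lt (hμpos y)) (hl.2 x₀ y)
  have hp_sum : ∀ l : Fin (n + 1) → ℝ, l 0 = 1 → ∑ y, p l y = 1 := by
    intro l hl0
    have h1 : ∑ y, p l y = ∑ y, (∑ j, l j * f j x₀ * f j y) * μ y :=
      Finset.sum_congr rfl (fun y _ => by rw [hp]; ring)
    rw [h1, sum_swap_mul (fun j y => l j * f j x₀ * f j y) μ]
    have h2 : ∀ j : Fin (n + 1), ∑ y, l j * f j x₀ * f j y * μ y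
        = l j * f j x₀ * (if j = 0 then (1:ℝ) else 0) := by
      intro j
      rw [← hμ0 j, Finset.mul_sum]
      exact Finset.sum_congr rfl (fun y _ => by ring)
    rw [Finset.sum_congr rfl (fun j _ => h2 j)]
    simp [Finset.sum_ite_eq', hl0, hf0 x₀]
  have hp_rep : ∀ l : Fin (n + 1) → ℝ, ∀ i, ∑ y, p l y * (f i y / f i x₀) = l i := by
    intro l i
    have h1 : ∑ y, p l y * (f i y / f i x₀)
        = ∑ y, (∑ j, l j * f j x₀ * f j y) * (μ y * (f i y / f i x₀)) :=
      Finset.sum_congr rfl (fun y _ => by rw [hp]; ring)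
    rw [h1, sum_swap_mul (fun j y => l j * f j x₀ * f j y) (fun y => μ y * (f i y / f i x₀))]
    have h2 : ∀ j : Fin (n + 1), ∑ y, l j * f j x₀ * f j y * (μ y * (f i y / f i x₀))
        = l j * f j x₀ / f i x₀ * (if j = i then (1:ℝ) else 0) := by
      intro j
      rw [← horth j i, Finset.mul_sum]
      exact Finset.sum_congr rfl (fun y _ => by ring)
    rw [Finset.sum_congr rfl (fun j _ => h2 j)]
    simp only [mul_ite, mul_one, mul_zero, Finset.sum_ite_eq', Finset.mem_univ, if_true]
    rw [mul_div_assoc, div_self (hfx0 i), mul_one]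
  have hpdelta : ∀ x y, p (lam x) y = if x = y then 1 else 0 := by
    intro x y
    have h1 : ∑ j, lam x j * f j x₀ * f j y = ∑ j, f j x * f j y := by
      refine Finset.sum_congr rfl (fun j _ => ?_)
      show f j x / f j x₀ * f j x₀ * f j y = _
      rw [div_mul_cancel₀ _ (hfx0 j)]
    have hpx : p (lam x) y = μ y * ∑ j, lam x j * f j x₀ * f j y := rfl
    rw [hpx, h1, hdual x y]
    by_cases h : x = y
    · subst h; rw [if_pos rfl, if_pos rfl]
      field_simp
      exact div_self (ne_of_gt (hμpos x))
    · rw [if_neg h, if_neg h, mul_zero]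
  -- now the two inclusions
  apply Set.Subset.antisymm
  · -- extreme points are in the range
    intro l hl
    obtain ⟨hlS, hlext⟩ := hl
    have hnn := hp_nonneg l hlS
    have hsum := hp_sum l hlS.1
    obtain ⟨y, -, hy⟩ := Finset.exists_ne_zero_of_sum_ne_zero (by rw [hsum]; exact one_ne_zero)
    have hy' : 0 < p l y := lt_of_le_of_ne (hnn y) (Ne.symm hy)
    have hple1 : p l y ≤ 1 := by
      rw [← hsum]
      exact Finset.single_le_sum (fun z _ => hnn z) (Finset.mem_univ y)
    rcases eq_or_lt_of_le hple1 with heq1 | hlt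
    · -- p l y = 1 : all other weights vanish, l = lam y
      have herase : ∑ z ∈ Finset.univ.erase y, p l z = 0 := by
        have h3 := Finset.add_sum_erase Finset.univ (p l) (Finset.mem_univ y)
        rw [hsum, heq1] at h3
        linarith
      have hz : ∀ z, z ≠ y → p l z = 0 := by
        intro z hzy
        have := (Finset.sum_eq_zero_iff_of_nonneg (fun z _ => hnn z)).mp herase
        exact this z (Finset.mem_erase.mpr ⟨hzy, Finset.mem_univ z⟩)
      refine ⟨y, ?_⟩
      funext i
      show f i y / f i x₀ = l i
      rw [← hp_rep l i]
      rw [Finset.sum_eq_single y (fun z _ hzy => by rw [hz z hzy, zero_mul]) (fun h => absurd (Finset.mem_univ y) h)]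
      rw [heq1, one_mul]
    · -- 0 < p l y < 1 : split l as a proper convex combination
      set t := p l y with ht
      set r : Fin (n + 1) → ℝ :=
        fun i => (∑ z ∈ Finset.univ.erase y, p l z * (f i z / f i x₀)) * (1 - t)⁻¹ with hr
      have ht1 : (1 : ℝ) - t ≠ 0 := by linarith
      have hrS : r ∈ S := by
        constructor
        · show (∑ z ∈ Finset.univ.erase y, p l z * (f 0 z / f 0 x₀)) * (1 - t)⁻¹ = 1
          have h4 : ∑ z ∈ Finset.univ.erase y, p l z * (f 0 z / f 0 x₀)
              = ∑ z ∈ Finset.univ.erase y, p l z := by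
            refine Finset.sum_congr rfl (fun z _ => ?_)
            rw [hf0 z, hf0 x₀]; norm_num
          have h5 := Finset.add_sum_erase Finset.univ (p l) (Finset.mem_univ y)
          rw [hsum] at h5
          rw [h4, show ∑ z ∈ Finset.univ.erase y, p l z = 1 - t by linarith]
          exact mul_inv_cancel₀ ht1
        · intro a b
          have key : ∑ i, r i * f i a * f i b
              = ∑ z ∈ Finset.univ.erase y, (p l z * (1 - t)⁻¹)
                  * ∑ i, f i a * f i b * f i z / f i x₀ := by
            have h6 : ∀ i : Fin (n + 1), r i * f i a * f i b
                = ∑ z ∈ Finset.univ.erase y,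
                    (p l z * (1 - t)⁻¹) * (f i a * f i b * f i z / f i x₀) := by
              intro i
              show (∑ z ∈ Finset.univ.erase y, p l z * (f i z / f i x₀)) * (1 - t)⁻¹
                  * f i a * f i b = _
              rw [Finset.sum_mul, Finset.sum_mul, Finset.sum_mul]
              exact Finset.sum_congr rfl (fun z _ => by ring)
            rw [Finset.sum_congr rfl (fun i _ => h6 i), Finset.sum_comm]
            exact Finset.sum_congr rfl (fun z _ => (Finset.mul_sum _ _ _).symm)
          rw [key]
          refine Finset.sum_nonneg (fun z _ => mul_nonneg ?_ (hHGP a b z))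
          exact mul_nonneg (hnn z) (inv_nonneg.mpr (by linarith))
      have hseg : l ∈ openSegment ℝ (lam y) r := by
        refine ⟨t, 1 - t, hy', by linarith, by ring, ?_⟩
        funext i
        show t * lam y i + (1 - t) * r i = l i
        have h7 : (1 - t) * r i = ∑ z ∈ Finset.univ.erase y, p l z * (f i z / f i x₀) := by
          show (1 - t) * ((∑ z ∈ Finset.univ.erase y, p l z * (f i z / f i x₀)) * (1 - t)⁻¹) = _
          rw [mul_comm, mul_assoc, inv_mul_cancel₀ ht1, mul_one]
        rw [h7, ← hp_rep l i, ← Finset.add_sum_erase Finset.univ (fun z => p l z * (f i z / f i x₀)) (Finset.mem_univ y)]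
      have := hlext (hlam_mem y) hrS hseg
      exact ⟨y, this⟩
  · -- each lam x is an extreme point
    rintro - ⟨x, rfl⟩
    refine ⟨hlam_mem x, ?_⟩
    intro l1 h1 l2 h2 hseg
    obtain ⟨t, s, ht, hs, hts, heqseg⟩ := hseg
    have hcoord : ∀ j, t * l1 j + s * l2 j = lam x j := by
      intro j
      have := congrFun heqseg j
      simpa [Pi.add_apply, Pi.smul_apply, smul_eq_mul] using this
    have hcomb : ∀ y, t * p l1 y + s * p l2 y = if x = y then 1 else 0 := by
      intro y
      rw [← hpdelta x y]
      have hpx : p (lam x) y = μ y * ∑ j, lam x j * f j x₀ * f j y := rfl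
      have e1 : p l1 y = μ y * ∑ j, l1 j * f j x₀ * f j y := rfl
      have e2 : p l2 y = μ y * ∑ j, l2 j * f j x₀ * f j y := rfl
      rw [hpx, e1, e2]
      have h8 : ∑ j, lam x j * f j x₀ * f j y
          = ∑ j, (t * l1 j + s * l2 j) * f j x₀ * f j y :=
        Finset.sum_congr rfl (fun j _ => by rw [hcoord j])
      have h9 : ∑ j, (t * l1 j + s * l2 j) * f j x₀ * f j y
          = t * (∑ j, l1 j * f j x₀ * f j y) + s * (∑ j, l2 j * f j x₀ * f j y) := by
        rw [Finset.mul_sum, Finset.mul_sum, ← Finset.sum_add_distrib]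
        exact Finset.sum_congr rfl (fun j _ => by ring)
      rw [h8, h9]
      ring
    have hnn1 := hp_nonneg l1 h1
    have hnn2 := hp_nonneg l2 h2
    have hzero : ∀ y, y ≠ x → p l1 y = 0 ∧ p l2 y = 0 := by
      intro y hyx
      have h10 := hcomb y
      rw [if_neg (fun h => hyx h.symm)] at h10
      constructor
      · nlinarith [mul_nonneg ht.le (hnn1 y), mul_nonneg hs.le (hnn2 y), hnn1 y, hnn2 y]
      · nlinarith [mul_nonneg ht.le (hnn1 y), mul_nonneg hs.le (hnn2 y), hnn1 y, hnn2 y]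
    have hone1 : p l1 x = 1 := by
      have hsum1 := hp_sum l1 h1.1
      rw [Finset.sum_eq_single x (fun z _ hz => (hzero z hz).1) (fun h => absurd (Finset.mem_univ x) h)] at hsum1
      exact hsum1
    have hone2 : p l2 x = 1 := by
      have hsum2 := hp_sum l2 h2.1
      rw [Finset.sum_eq_single x (fun z _ hz => (hzero z hz).2) (fun h => absurd (Finset.mem_univ x) h)] at hsum2
      exact hsum2
    · funext i
      have := hp_rep l1 i
      rw [Finset.sum_eq_single x (fun z _ hz => by rw [(hzero z hz).1, zero_mul]) (fun h => absurd (Finset.mem_univ x) h), hone1, one_mul] at this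
      exact this.symm
end

section
/- If a unitary orthonormal basis F on a finite probability space has the GKS property, then the first GKS inequality holds: for any functions F and H written with nonnegative coefficients in the basis F, ∫ F exp(H) dμ ≥ 0. -/
open Matrix


/-- First GKS inequality. If the unitary orthonormal basis `f` on a finite
probability space has the GKS property, then for any functions `F`, `H` written with
nonnegative coefficients in the basis (i.e. GKS functions), `∫ F·exp(H) dμ ≥ 0`. -/
theorem stmt15 {E : Type*} [Fintype E] [Nonempty E] (n : ℕ)
    (μ : E → ℝ) (f : Fin (n + 1) → E → ℝ)
    (hcard : Fintype.card E = n + 1)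
    (hμpos : ∀ x, 0 < μ x) (hμsum : ∑ x, μ x = 1)
    (hf0 : ∀ x, f 0 x = 1)
    (horth : ∀ i j, ∑ x, μ x * f i x * f j x = if i = j then (1 : ℝ) else 0)
    (hGKS : ∀ i j k, 0 ≤ ∑ x, μ x * f i x * f j x * f k x)
    (F H : E → ℝ)
    (cF : Fin (n + 1) → ℝ) (hcF : ∀ i, 0 ≤ cF i) (hF : F = fun x => ∑ i, cF i * f i x)
    (cH : Fin (n + 1) → ℝ) (hcH : ∀ i, 0 ≤ cH i) (hH : H = fun x => ∑ i, cH i * f i x) :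
    0 ≤ ∑ x, μ x * F x * Real.exp (H x) := by
  classical
  obtain ⟨e⟩ : Nonempty (E ≃ Fin (n + 1)) := ⟨Fintype.equivFinOfCardEq hcard⟩
  set A : Matrix (Fin (n + 1)) (Fin (n + 1)) ℝ :=
    Matrix.of fun i j => Real.sqrt (μ (e.symm j)) * f i (e.symm j) with hA
  have hAAT : A * Aᵀ = 1 := by
    ext i k
    simp only [Matrix.mul_apply, Matrix.transpose_apply, Matrix.one_apply, hA, Matrix.of_apply]
    calc ∑ j, (Real.sqrt (μ (e.symm j)) * f i (e.symm j)) *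
            (Real.sqrt (μ (e.symm j)) * f k (e.symm j))
        = ∑ j, μ (e.symm j) * f i (e.symm j) * f k (e.symm j) := by
          refine Finset.sum_congr rfl fun j _ => ?_
          rw [show (Real.sqrt (μ (e.symm j)) * f i (e.symm j)) *
              (Real.sqrt (μ (e.symm j)) * f k (e.symm j)) =
              (Real.sqrt (μ (e.symm j)) * Real.sqrt (μ (e.symm j))) *
              (f i (e.symm j) * f k (e.symm j)) by ring,
            Real.mul_self_sqrt (hμpos _).le]
          ring
      _ = ∑ x, μ x * f i x * f k x :=
          Fintype.sum_equiv e.symm _ _ (fun j => rfl)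
      _ = if i = k then 1 else 0 := horth i k
  have hATA : Aᵀ * A = 1 := mul_eq_one_comm.mp hAAT
  have hdual : ∀ x y, ∑ i, f i x * f i y = if x = y then (μ x)⁻¹ else 0 := by
    intro x y
    have h := congrArg (fun M : Matrix (Fin (n + 1)) (Fin (n + 1)) ℝ => M (e x) (e y)) hATA
    simp only [Matrix.mul_apply, Matrix.transpose_apply, Matrix.one_apply, hA, Matrix.of_apply,
      Equiv.symm_apply_apply] at h
    have hsum : ∑ i, (Real.sqrt (μ x) * f i x) * (Real.sqrt (μ y) * f i y)
        = (Real.sqrt (μ x) * Real.sqrt (μ y)) * ∑ i, f i x * f i y := by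
      rw [Finset.mul_sum]
      exact Finset.sum_congr rfl fun i _ => by ring
    rw [hsum] at h
    by_cases hxy : x = y
    · subst hxy
      simp only [if_pos rfl, EmbeddingLike.apply_eq_iff_eq] at h ⊢
      rw [Real.mul_self_sqrt (hμpos x).le] at h
      exact (inv_eq_of_mul_eq_one_right h).symm
    · have : e x ≠ e y := fun hc => hxy (e.injective hc)
      simp only [if_neg this, if_neg hxy] at h ⊢
      have hpos : (0:ℝ) < Real.sqrt (μ x) * Real.sqrt (μ y) :=
        mul_pos (Real.sqrt_pos.mpr (hμpos x)) (Real.sqrt_pos.mpr (hμpos y))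
      exact (mul_eq_zero.mp h).resolve_left (ne_of_gt hpos)
  have hcomplete : ∀ (g : E → ℝ) (x : E), ∑ i, (∑ y, μ y * g y * f i y) * f i x = g x := by
    intro g x
    calc ∑ i, (∑ y, μ y * g y * f i y) * f i x
        = ∑ y, (μ y * g y) * ∑ i, f i y * f i x := by
          simp_rw [Finset.sum_mul]
          rw [Finset.sum_comm]
          refine Finset.sum_congr rfl fun y _ => ?_
          rw [Finset.mul_sum]
          exact Finset.sum_congr rfl fun i _ => by ring
      _ = g x := by
          simp_rw [hdual, mul_ite, mul_zero]
          rw [Finset.sum_ite_eq' Finset.univ x]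
          simp only [Finset.mem_univ, if_pos]
          rw [mul_comm (μ x) (g x), mul_assoc, mul_inv_cancel₀ (hμpos x).ne', mul_one]
  -- multiplying a function with nonneg coefficients by H preserves nonneg coefficients
  have hcoef : ∀ g : E → ℝ, (∀ k, 0 ≤ ∑ x, μ x * g x * f k x) →
      ∀ k, 0 ≤ ∑ x, μ x * (g x * H x) * f k x := by
    intro g hg k
    have hHx : ∀ x, H x = ∑ j, cH j * f j x := fun x => by rw [hH]
    set a : Fin (n + 1) → ℝ := fun i => ∑ y, μ y * g y * f i y with ha
    have hrepr : ∀ x, g x = ∑ i, a i * f i x := fun x => (hcomplete g x).symm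
    have key : ∑ x, μ x * (g x * H x) * f k x
        = ∑ i, ∑ j, (a i * cH j) * ∑ x, μ x * f i x * f j x * f k x := by
      calc ∑ x, μ x * (g x * H x) * f k x
          = ∑ x, ∑ i, ∑ j, (a i * cH j) * (μ x * f i x * f j x * f k x) := by
            refine Finset.sum_congr rfl fun x _ => ?_
            rw [hrepr x, hHx x]
            simp_rw [Finset.sum_mul_sum, Finset.mul_sum, Finset.sum_mul]
            exact Finset.sum_congr rfl fun i _ => Finset.sum_congr rfl fun j _ => by ring
        _ = ∑ i, ∑ x, ∑ j, (a i * cH j) * (μ x * f i x * f j x * f k x) := Finset.sum_comm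
        _ = ∑ i, ∑ j, ∑ x, (a i * cH j) * (μ x * f i x * f j x * f k x) :=
            Finset.sum_congr rfl fun i _ => Finset.sum_comm
        _ = ∑ i, ∑ j, (a i * cH j) * ∑ x, μ x * f i x * f j x * f k x := by
            simp_rw [Finset.mul_sum]
    rw [key]
    refine Finset.sum_nonneg fun i _ => Finset.sum_nonneg fun j _ => ?_
    exact mul_nonneg (mul_nonneg (hg i) (hcH j)) (hGKS i j k)
  -- all moments have nonneg coefficients
  have hm : ∀ m : ℕ, ∀ k, 0 ≤ ∑ x, μ x * (F x * H x ^ m) * f k x := by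
    intro m
    induction m with
    | zero =>
      intro k
      have : ∑ x, μ x * (F x * H x ^ 0) * f k x = cF k := by
        calc ∑ x, μ x * (F x * H x ^ 0) * f k x
            = ∑ x, ∑ i, cF i * (μ x * f i x * f k x) := by
              refine Finset.sum_congr rfl fun x _ => ?_
              rw [hF]
              simp only [pow_zero, mul_one]
              rw [Finset.mul_sum, Finset.sum_mul]
              exact Finset.sum_congr rfl fun i _ => by ring
          _ = ∑ i, cF i * ∑ x, μ x * f i x * f k x := by
              rw [Finset.sum_comm]; simp_rw [Finset.mul_sum]
          _ = cF k := by
              simp_rw [horth, mul_ite, mul_one, mul_zero]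
              rw [Finset.sum_ite_eq' Finset.univ k]
              simp
      rw [this]; exact hcF k
    | succ m ih =>
      intro k
      have h := hcoef (fun x => F x * H x ^ m) ih k
      calc (0:ℝ) ≤ ∑ x, μ x * ((F x * H x ^ m) * H x) * f k x := h
        _ = ∑ x, μ x * (F x * H x ^ (m + 1)) * f k x :=
            Finset.sum_congr rfl fun x _ => by rw [pow_succ]; ring
  have hfin : ∀ m : ℕ, 0 ≤ ∑ x, μ x * F x * (H x ^ m / m.factorial) := by
    intro m
    have h := hm m 0
    have heq : ∑ x, μ x * F x * (H x ^ m / m.factorial)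
        = (∑ x, μ x * (F x * H x ^ m) * f 0 x) / m.factorial := by
      rw [Finset.sum_div]
      exact Finset.sum_congr rfl fun x _ => by rw [hf0]; ring
    rw [heq]
    exact div_nonneg h (Nat.cast_nonneg _)
  have hexp : ∀ x : E, Real.exp (H x) = ∑' m : ℕ, H x ^ m / m.factorial := by
    intro x
    rw [Real.exp_eq_exp_ℝ, NormedSpace.exp_eq_tsum ℝ]
    simp [div_eq_inv_mul, smul_eq_mul]
  have hsummable : ∀ x : E, Summable (fun m : ℕ => μ x * F x * (H x ^ m / m.factorial)) :=
    fun x => (Real.summable_pow_div_factorial (H x)).mul_left _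
  have hmain : ∑ x, μ x * F x * Real.exp (H x)
      = ∑' m : ℕ, ∑ x, μ x * F x * (H x ^ m / m.factorial) := by
    calc ∑ x, μ x * F x * Real.exp (H x)
        = ∑ x, ∑' m : ℕ, μ x * F x * (H x ^ m / m.factorial) := by
          refine Finset.sum_congr rfl fun x _ => ?_
          rw [hexp x, ← tsum_mul_left]
      _ = ∑' m : ℕ, ∑ x, μ x * F x * (H x ^ m / m.factorial) :=
          (Summable.tsum_finsetSum fun x _ => hsummable x).symm
  rw [hmain]
  exact tsum_nonneg hfin
end

section
/- The GKS and HGP properties are stable under tensorization: if (E_1, μ_1, F_1) and (E_2, μ_2, F_2) are finite probability spaces with unitary orthonormal bases both having the GKS property (resp. both the HGP property at points x_0^{(1)}, x_0^{(2)}), then the basis F_1 ⊗ F_2 = (f_i ⊗ g_j) on (E_1 × E_2, μ_1 ⊗ μ_2) has the GKS property (resp. the HGP property at (x_0^{(1)}, x_0^{(2)})). -/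
/-- Stability of the GKS and HGP properties under tensorization. Given two
finite probability spaces with unitary orthonormal bases `(E₁, μ₁, f)` and
`(E₂, μ₂, g)`, if both bases have the GKS property then the tensor basis
`(i,j) ↦ f i ⊗ g j` on `(E₁ × E₂, μ₁ ⊗ μ₂)` has the GKS property; and if both have the
hypergroup property at points `x₀`, `y₀`, then the tensor basis has the hypergroup
property at `(x₀, y₀)`. -/
theorem stmt16 {E₁ E₂ : Type*} [Fintype E₁] [Fintype E₂] [Nonempty E₁] [Nonempty E₂]
    (n m : ℕ)
    (μ₁ : E₁ → ℝ) (μ₂ : E₂ → ℝ)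
    (f : Fin (n + 1) → E₁ → ℝ) (g : Fin (m + 1) → E₂ → ℝ)
    (hcard₁ : Fintype.card E₁ = n + 1) (hcard₂ : Fintype.card E₂ = m + 1)
    (hμ₁pos : ∀ x, 0 < μ₁ x) (hμ₁sum : ∑ x, μ₁ x = 1)
    (hμ₂pos : ∀ y, 0 < μ₂ y) (hμ₂sum : ∑ y, μ₂ y = 1)
    (hf0 : ∀ x, f 0 x = 1) (hg0 : ∀ y, g 0 y = 1)
    (horth₁ : ∀ i j, ∑ x, μ₁ x * f i x * f j x = if i = j then (1 : ℝ) else 0)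
    (horth₂ : ∀ i j, ∑ y, μ₂ y * g i y * g j y = if i = j then (1 : ℝ) else 0) :
    ((∀ i j k, 0 ≤ ∑ x, μ₁ x * f i x * f j x * f k x) →
     (∀ i j k, 0 ≤ ∑ y, μ₂ y * g i y * g j y * g k y) →
     ∀ i j k : Fin (n + 1) × Fin (m + 1),
       0 ≤ ∑ p : E₁ × E₂, (μ₁ p.1 * μ₂ p.2) *
         (f i.1 p.1 * g i.2 p.2) * (f j.1 p.1 * g j.2 p.2) * (f k.1 p.1 * g k.2 p.2)) ∧
    (∀ x₀ : E₁, ∀ y₀ : E₂,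
     (∀ i, f i x₀ ≠ 0) → (∀ j, g j y₀ ≠ 0) →
     (∀ x y z, 0 ≤ ∑ i, f i x * f i y * f i z / f i x₀) →
     (∀ x y z, 0 ≤ ∑ j, g j x * g j y * g j z / g j y₀) →
     ∀ x y z : E₁ × E₂,
       0 ≤ ∑ i : Fin (n + 1) × Fin (m + 1),
         (f i.1 x.1 * g i.2 x.2) * (f i.1 y.1 * g i.2 y.2) * (f i.1 z.1 * g i.2 z.2) /
           (f i.1 x₀ * g i.2 y₀)) := by
  constructor
  · intro h1 h2 i j k
    have : ∑ p : E₁ × E₂, (μ₁ p.1 * μ₂ p.2) *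
         (f i.1 p.1 * g i.2 p.2) * (f j.1 p.1 * g j.2 p.2) * (f k.1 p.1 * g k.2 p.2)
        = (∑ x, μ₁ x * f i.1 x * f j.1 x * f k.1 x) *
          (∑ y, μ₂ y * g i.2 y * g j.2 y * g k.2 y) := by
      rw [Fintype.sum_prod_type, Finset.sum_mul_sum]
      exact Finset.sum_congr rfl fun x _ => Finset.sum_congr rfl fun y _ => by ring
    rw [this]
    exact mul_nonneg (h1 _ _ _) (h2 _ _ _)
  · intro x₀ y₀ hf hg h1 h2 x y z
    have : ∑ i : Fin (n + 1) × Fin (m + 1),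
         (f i.1 x.1 * g i.2 x.2) * (f i.1 y.1 * g i.2 y.2) * (f i.1 z.1 * g i.2 z.2) /
           (f i.1 x₀ * g i.2 y₀)
        = (∑ i, f i x.1 * f i y.1 * f i z.1 / f i x₀) *
          (∑ j, g j x.2 * g j y.2 * g j z.2 / g j y₀) := by
      rw [Fintype.sum_prod_type, Finset.sum_mul_sum]
      refine Finset.sum_congr rfl fun a _ => Finset.sum_congr rfl fun b _ => ?_
      field_simp
    rw [this]
    exact mul_nonneg (h1 _ _ _) (h2 _ _ _)
end

section
/- Let V_1 be a kernel on a compact space E viewed as a bounded operator on C(E), with operator norm ‖V_1‖, and suppose Σ_n ‖V_1^{⊙n}‖ < ∞. If a continuous function F satisfies F = V_0(F) + V_1(F) for another kernel V_0, then F = W_1 ∘ V_0 (F) where W_1 = Σ_{n≥0} V_1^{⊙n}. In particular, if V_0 and V_1 are nonnegative kernels, V_0 is supported on a closed subset E_0, and F restricted to E_0 is nonnegative, then F is nonnegative on all of E. -/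
/-!
Since `V₀ F = (1 - V₁) F` and the Neumann series `W₁ = ∑ V₁ⁿ` is a left inverse of
`1 - V₁`, `F = W₁ (V₀ F)`. For positivity: `V₀ F` only sees `F` on `E₀`, where
`F = F ⊔ 0`, so `V₀ F ≥ 0`; every `V₁ⁿ` preserves nonnegativity, and `T ↦ T g x` is a
continuous linear functional, so the series `W₁ (V₀ F)` is nonnegative at every point.
-/

namespace ContinuousLinearMap

theorem eq_tsum_pow_apply_of_eq_add {𝕜 X : Type*} [NontriviallyNormedField 𝕜]
    [NormedAddCommGroup X] [NormedSpace 𝕜 X] {V₀ V₁ : X →L[𝕜] X}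
    (hV₁ : Summable (V₁ ^ ·)) {F : X} (hF : F = V₀ F + V₁ F) :
    F = (∑' n : ℕ, V₁ ^ n) (V₀ F) := by
  have hV₀F : V₀ F = (1 - V₁) F := eq_sub_of_add_eq hF.symm
  rw [hV₀F, ← mul_apply_eq_comp, hV₁.tsum_pow_mul_one_sub, one_apply_eq_self]

variable {E : Type*} [TopologicalSpace E] [CompactSpace E]

theorem pow_apply_nonneg {T : C(E, ℝ) →L[ℝ] C(E, ℝ)}
    (hT : ∀ g : C(E, ℝ), (∀ x, 0 ≤ g x) → ∀ x, 0 ≤ T g x) (n : ℕ) {g : C(E, ℝ)}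
    (hg : ∀ x, 0 ≤ g x) : ∀ x, 0 ≤ (T ^ n) g x := by
  induction n with
  | zero => simpa using hg
  | succ n ih => rw [pow_succ', mul_apply_eq_comp]; exact hT _ ih

theorem tsum_pow_apply_nonneg {T : C(E, ℝ) →L[ℝ] C(E, ℝ)}
    (hT : ∀ g : C(E, ℝ), (∀ x, 0 ≤ g x) → ∀ x, 0 ≤ T g x) (hsum : Summable (T ^ ·))
    {g : C(E, ℝ)} (hg : ∀ x, 0 ≤ g x) (x : E) : 0 ≤ (∑' n : ℕ, T ^ n) g x :=
  (hsum.hasSum.mapL ((ContinuousMap.evalCLM ℝ x).comp (apply ℝ C(E, ℝ) g))).nonneg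
    fun n => pow_apply_nonneg hT n hg x

end ContinuousLinearMap

theorem ContinuousMap.apply_nonneg_of_nonneg_on {E : Type*} [TopologicalSpace E]
    {V : C(E, ℝ) → C(E, ℝ)} {E₀ : Set E}
    (hsupp : ∀ g h : C(E, ℝ), (∀ x ∈ E₀, g x = h x) → V g = V h)
    (hV : ∀ g : C(E, ℝ), (∀ x, 0 ≤ g x) → ∀ x, 0 ≤ V g x)
    {F : C(E, ℝ)} (hF : ∀ x ∈ E₀, 0 ≤ F x) (x : E) : 0 ≤ V F x := by
  rw [hsupp F (F ⊔ 0) fun y hy => (max_eq_left (hF y hy)).symm]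
  exact hV _ (fun y => le_max_right _ _) x

theorem stmt17_general {E : Type*} [TopologicalSpace E] [CompactSpace E]
    (V₀ V₁ : C(E, ℝ) →L[ℝ] C(E, ℝ))
    (hsum : Summable fun n : ℕ => ‖V₁ ^ n‖)
    (F : C(E, ℝ)) (hF : F = V₀ F + V₁ F) :
    F = (∑' n : ℕ, V₁ ^ n) (V₀ F) ∧
    (∀ E₀ : Set E, IsClosed E₀ →
      (∀ g h : C(E, ℝ), (∀ x ∈ E₀, g x = h x) → V₀ g = V₀ h) →
      (∀ g : C(E, ℝ), (∀ x, 0 ≤ g x) → ∀ x, 0 ≤ V₀ g x) →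
      (∀ g : C(E, ℝ), (∀ x, 0 ≤ g x) → ∀ x, 0 ≤ V₁ g x) →
      (∀ x ∈ E₀, 0 ≤ F x) → ∀ x, 0 ≤ F x) := by
  have hpow : Summable (V₁ ^ ·) := Summable.of_norm (E := C(E, ℝ) →L[ℝ] C(E, ℝ)) hsum
  have hW₁ : F = (∑' n : ℕ, V₁ ^ n) (V₀ F) :=
    ContinuousLinearMap.eq_tsum_pow_apply_of_eq_add hpow hF
  refine ⟨hW₁, fun E₀ _ hsupp hV₀ hV₁ hFE₀ x => ?_⟩
  rw [hW₁]
  exact ContinuousLinearMap.tsum_pow_apply_nonneg hV₁ hpow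
    (ContinuousMap.apply_nonneg_of_nonneg_on hsupp hV₀ hFE₀) x

/-- Let `V₀, V₁` be kernels on a compact space `E`, viewed as bounded
operators on `C(E)`, with `Σ_n ‖V₁ⁿ‖ < ∞`. If a continuous function `F` satisfies
`F = V₀ F + V₁ F`, then `F = W₁ (V₀ F)` where `W₁ = Σ_{n ≥ 0} V₁ⁿ`. In particular, if
`V₀` and `V₁` are nonnegative kernels, `V₀` is supported on a closed subset `E₀` (i.e.
`V₀ F` depends only on the restriction of `F` to `E₀`), and `F` is nonnegative on `E₀`,
then `F` is nonnegative on all of `E`. -/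
theorem stmt17 {E : Type*} [TopologicalSpace E] [CompactSpace E] [T2Space E]
    (V₀ V₁ : C(E, ℝ) →L[ℝ] C(E, ℝ))
    (hsum : Summable fun n : ℕ => ‖V₁ ^ n‖)
    (F : C(E, ℝ)) (hF : F = V₀ F + V₁ F) :
    F = (∑' n : ℕ, V₁ ^ n) (V₀ F) ∧
    (∀ E₀ : Set E, IsClosed E₀ →
      (∀ g h : C(E, ℝ), (∀ x ∈ E₀, g x = h x) → V₀ g = V₀ h) →
      (∀ g : C(E, ℝ), (∀ x, 0 ≤ g x) → ∀ x, 0 ≤ V₀ g x) →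
      (∀ g : C(E, ℝ), (∀ x, 0 ≤ g x) → ∀ x, 0 ≤ V₁ g x) →
      (∀ x ∈ E₀, 0 ≤ F x) → ∀ x, 0 ≤ F x) :=
  stmt17_general V₀ V₁ hsum F hF
end

section
/- Iterated integrals over nested triangles satisfy the factorial-squared bound: if the kernel V_1(M,dS) = 1_{Δ_M}(S) a(M,S) dS with |a| ≤ κ on the triangle Δ_M ⊂ ℝ², then ‖V_1^{⊙n}‖ ≤ κⁿ |Δ_M|ⁿ / (n!)², where |Δ_M| is the area of Δ_M. Consequently Σ_n ‖V_1^{⊙n}‖ converges. -/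
open MeasureTheory

/-- The triangle `Δ_M` associated with `M = (X, Y)`: the region bounded by the lines
`x + y = X + Y`, `y - x = Y - X` and `y = 0`. Membership `S ∈ tri M` is also the
partial order `S ≤ M` used below. -/
def tri (M : ℝ × ℝ) : Set (ℝ × ℝ) :=
  {S | 0 ≤ S.2 ∧ S.1 + S.2 ≤ M.1 + M.2 ∧ S.2 - S.1 ≤ M.2 - M.1}

/-- The rectangle `[S, M] = {U | S ≤ U ≤ M}` for the partial order `S ≤ M ↔ S ∈ Δ_M`. -/
def rect (S M : ℝ × ℝ) : Set (ℝ × ℝ) := {U | S ∈ tri U ∧ U ∈ tri M}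

/-- The `n`-fold composed density `a_n` of the kernel `V₁(M, dS) = 1_{Δ_M}(S) a(M,S) dS`:
`a_1 = a` and `a_{n+1}(M,S) = ∫_{S ≤ U ≤ M} a(M,U) a_n(U,S) dU`, i.e. the integral over
ordered chains `S ≤ S₁ ≤ ... ≤ S_{n-1} ≤ M` of the product of the values of `a`. -/
noncomputable def iterDensity (a : ℝ × ℝ → ℝ × ℝ → ℝ) : ℕ → ℝ × ℝ → ℝ × ℝ → ℝ
  | 0 => fun _ _ => 0
  | 1 => a
  | n + 2 => fun M S => ∫ U in rect S M, a M U * iterDensity a (n + 1) U S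

lemma tri_meas (M : ℝ × ℝ) : MeasurableSet (tri M) :=
  (measurableSet_le measurable_const measurable_snd).inter
    ((measurableSet_le (measurable_fst.add measurable_snd) measurable_const).inter
      (measurableSet_le (measurable_snd.sub measurable_fst) measurable_const))

lemma rect_meas (S M : ℝ × ℝ) : MeasurableSet (rect S M) := by
  have h1 : MeasurableSet {U : ℝ × ℝ | S ∈ tri U} := by
    by_cases h : 0 ≤ S.2
    · have : {U : ℝ × ℝ | S ∈ tri U} =
        {U : ℝ × ℝ | S.1 + S.2 ≤ U.1 + U.2} ∩ {U | S.2 - S.1 ≤ U.2 - U.1} := by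
        ext U; simp [tri, h]
      rw [this]
      exact (measurableSet_le measurable_const (measurable_fst.add measurable_snd)).inter
        (measurableSet_le measurable_const (measurable_snd.sub measurable_fst))
    · have : {U : ℝ × ℝ | S ∈ tri U} = ∅ := by ext U; simp [tri, h]
      rw [this]; exact MeasurableSet.empty
  exact h1.inter (tri_meas M)

lemma tri_trans {S U M : ℝ × ℝ} (h1 : S ∈ tri U) (h2 : U ∈ tri M) : S ∈ tri M :=
  ⟨h1.1, h1.2.1.trans h2.2.1, h1.2.2.trans h2.2.2⟩

lemma tri_snd_nonneg {U M : ℝ × ℝ} (h : U ∈ tri M) : 0 ≤ U.2 := h.1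

lemma tri_snd_le {U M : ℝ × ℝ} (h : U ∈ tri M) : U.2 ≤ M.2 := by
  have := add_le_add h.2.1 h.2.2; linarith

lemma E_meas : MeasurableSet {z : (ℝ × ℝ) × (ℝ × ℝ) | z.1 ∈ tri z.2} := by
  have : {z : (ℝ × ℝ) × (ℝ × ℝ) | z.1 ∈ tri z.2} =
      {z : (ℝ × ℝ) × (ℝ × ℝ) | 0 ≤ z.1.2} ∩
      ({z | z.1.1 + z.1.2 ≤ z.2.1 + z.2.2} ∩ {z | z.1.2 - z.1.1 ≤ z.2.2 - z.2.1}) := by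
    ext z; simp [tri]
  rw [this]
  exact (measurableSet_le measurable_const measurable_fst.snd).inter
    ((measurableSet_le (measurable_fst.fst.add measurable_fst.snd)
        (measurable_snd.fst.add measurable_snd.snd)).inter
      (measurableSet_le (measurable_fst.snd.sub measurable_fst.fst)
        (measurable_snd.snd.sub measurable_snd.fst)))

lemma keyInt (M : ℝ × ℝ) (hM : 0 ≤ M.2) (k : ℕ) :
    ∫⁻ U in tri M, ENNReal.ofReal (U.2 ^ k) ∂volume =
      ENNReal.ofReal (2 * M.2 ^ (k + 2) / ((k + 1) * (k + 2))) := by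
  set Y := M.2 with hY
  have h1 : ∫⁻ U in tri M, ENNReal.ofReal (U.2 ^ k) ∂volume =
      ∫⁻ y : ℝ, ∫⁻ x : ℝ,
        (tri M).indicator (fun U => ENNReal.ofReal (U.2 ^ k)) (x, y) ∂volume ∂volume := by
    rw [← lintegral_indicator (tri_meas M)]
    rw [MeasureTheory.Measure.volume_eq_prod ℝ ℝ]
    rw [lintegral_prod_symm]
    exact (Measurable.indicator (by fun_prop) (tri_meas M)).aemeasurable
  rw [h1]
  have h2 : ∀ y : ℝ, (∫⁻ x : ℝ,
      (tri M).indicator (fun U => ENNReal.ofReal (U.2 ^ k)) (x, y) ∂volume) =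
      (Set.Ici (0:ℝ)).indicator (fun y => ENNReal.ofReal (y ^ k * (2 * (Y - y)))) y := by
    intro y
    by_cases hy : 0 ≤ y
    · have hset : ∀ x : ℝ, (tri M).indicator (fun U => ENNReal.ofReal (U.2 ^ k)) (x, y) =
        (Set.Icc (y - (M.2 - M.1)) (M.1 + M.2 - y)).indicator
          (fun _ => ENNReal.ofReal (y ^ k)) x := by
        intro x
        by_cases hx : (x, y) ∈ tri M
        · rw [Set.indicator_of_mem hx, Set.indicator_of_mem]
          constructor <;> [linarith [hx.2.2]; linarith [hx.2.1]]
        · rw [Set.indicator_of_notMem hx, Set.indicator_of_notMem]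
          intro hmem
          exact hx ⟨hy, by linarith [hmem.2], by linarith [hmem.1]⟩
      simp only [hset]
      rw [lintegral_indicator measurableSet_Icc, setLIntegral_const]
      rw [Set.indicator_of_mem (Set.mem_Ici.mpr hy), Real.volume_Icc]
      have : M.1 + M.2 - y - (y - (M.2 - M.1)) = 2 * (Y - y) := by rw [hY]; ring
      rw [this, ← ENNReal.ofReal_mul (by positivity)]
    · have hset : ∀ x : ℝ, (tri M).indicator (fun U => ENNReal.ofReal (U.2 ^ k)) (x, y) = 0 := by
        intro x
        rw [Set.indicator_of_notMem]
        intro hmem; exact hy hmem.1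
      simp only [hset, lintegral_const, zero_mul]
      rw [Set.indicator_of_notMem (by simpa using hy)]
  simp only [h2]
  rw [lintegral_indicator measurableSet_Ici]
  have hsplit : Set.Ici (0:ℝ) = Set.Icc 0 Y ∪ Set.Ioi Y := by
    ext y; simp only [Set.mem_Ici, Set.mem_union, Set.mem_Icc, Set.mem_Ioi]
    constructor
    · intro h; by_cases h' : y ≤ Y; exacts [Or.inl ⟨h, h'⟩, Or.inr (lt_of_not_ge h')]
    · rintro (⟨h, _⟩ | h); exacts [h, le_trans hM h.le]
  rw [hsplit, lintegral_union measurableSet_Ioi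
    ((Set.Iic_disjoint_Ioi le_rfl).mono Set.Icc_subset_Iic_self le_rfl)]
  have hIoi : ∫⁻ y in Set.Ioi Y, ENNReal.ofReal (y ^ k * (2 * (Y - y))) ∂volume = 0 := by
    rw [← lintegral_zero]
    apply setLIntegral_congr_fun measurableSet_Ioi
    intro y hy
    rw [ENNReal.ofReal_eq_zero]
    have h0 : 0 ≤ y := le_trans hM (le_of_lt hy)
    exact mul_nonpos_of_nonneg_of_nonpos (pow_nonneg h0 k)
      (by simp only [Set.mem_Ioi] at hy; linarith)
  rw [hIoi, add_zero]
  have hcont : Continuous fun y : ℝ => y ^ k * (2 * (Y - y)) :=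
    (continuous_pow k).mul (continuous_const.mul (continuous_const.sub continuous_id))
  rw [← ofReal_integral_eq_lintegral_ofReal (hcont.integrableOn_Icc)
    ((ae_restrict_iff' measurableSet_Icc).mpr (ae_of_all _ fun y hy =>
      mul_nonneg (pow_nonneg hy.1 k) (by linarith [hy.2])))]
  congr 1
  rw [MeasureTheory.integral_Icc_eq_integral_Ioc, ← intervalIntegral.integral_of_le hM]
  have : ∀ y : ℝ, y ^ k * (2 * (Y - y)) = (2 * Y) * y ^ k - 2 * y ^ (k + 1) := by
    intro y; ring
  simp only [this]
  rw [intervalIntegral.integral_sub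
    ((intervalIntegral.intervalIntegrable_pow k).const_mul _)
    ((intervalIntegral.intervalIntegrable_pow (k+1)).const_mul _)]
  rw [intervalIntegral.integral_const_mul, intervalIntegral.integral_const_mul,
    integral_pow, integral_pow]
  have hk1 : ((k:ℝ) + 1) ≠ 0 := by positivity
  have hk2 : ((k:ℝ) + 1 + 1) ≠ 0 := by positivity
  push_cast
  field_simp
  ring

lemma vol_tri (M : ℝ × ℝ) (hM : 0 ≤ M.2) : volume (tri M) = ENNReal.ofReal (M.2 ^ 2) := by
  have h := keyInt M hM 0
  simp only [pow_zero, ENNReal.ofReal_one, setLIntegral_one] at h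
  rw [h]
  norm_num

lemma iter_meas (a : ℝ × ℝ → ℝ × ℝ → ℝ) (hmeas : Measurable (Function.uncurry a)) :
    ∀ n, Measurable (Function.uncurry (iterDensity a n))
  | 0 => by
      have : Function.uncurry (iterDensity a 0) = fun _ => (0:ℝ) := rfl
      rw [this]; exact measurable_const
  | 1 => hmeas
  | (n+2) => by
      have ih := iter_meas a hmeas (n+1)
      set E : Set (((ℝ × ℝ) × (ℝ × ℝ)) × (ℝ × ℝ)) :=
        {z | z.1.2 ∈ tri z.2 ∧ z.2 ∈ tri z.1.1} with hE
      have hEm : MeasurableSet E :=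
        MeasurableSet.inter (E_meas.preimage (measurable_fst.snd.prodMk measurable_snd))
          (E_meas.preimage (measurable_snd.prodMk measurable_fst.fst))
      set F : (((ℝ × ℝ) × (ℝ × ℝ)) × (ℝ × ℝ)) → ℝ :=
        E.indicator (fun z => a z.1.1 z.2 * iterDensity a (n+1) z.2 z.1.2) with hF
      have hFm : Measurable F :=
        Measurable.indicator
          ((hmeas.comp (measurable_fst.fst.prodMk measurable_snd)).mul
            (ih.comp (measurable_snd.prodMk measurable_fst.snd))) hEm
      have key : Function.uncurry (iterDensity a (n+2)) = fun p : (ℝ × ℝ) × (ℝ × ℝ) =>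
          ∫ U : ℝ × ℝ, F (p, U) := by
        funext p
        show (∫ U in rect p.2 p.1, a p.1 U * iterDensity a (n+1) U p.2) = _
        rw [← integral_indicator (rect_meas p.2 p.1)]
        congr 1
      rw [key]
      exact (hFm.stronglyMeasurable.integral_prod_right').measurable

lemma Gbound (a : ℝ × ℝ → ℝ × ℝ → ℝ) (κ : ℝ) (hκ : 0 ≤ κ) (ha : ∀ U S : ℝ × ℝ, |a U S| ≤ κ)
    (hmeas : Measurable (Function.uncurry a)) :
    ∀ n : ℕ, ∀ M : ℝ × ℝ, 0 ≤ M.2 →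
      (∫⁻ S in tri M, ENNReal.ofReal |iterDensity a (n+1) M S| ∂volume) ≤
        ENNReal.ofReal (κ ^ (n+1) * (M.2 ^ 2) ^ (n+1) / ((n+1).factorial : ℝ) ^ 2) := by
  intro n
  induction n with
  | zero =>
    intro M hM
    have h1 : (∫⁻ S in tri M, ENNReal.ofReal |iterDensity a 1 M S| ∂volume) ≤
        ∫⁻ _ in tri M, ENNReal.ofReal κ ∂volume :=
      lintegral_mono fun S => ENNReal.ofReal_le_ofReal (ha M S)
    rw [setLIntegral_const, vol_tri M hM, ← ENNReal.ofReal_mul hκ] at h1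
    refine h1.trans (le_of_eq ?_)
    norm_num [Nat.factorial]
  | succ n IH =>
    intro M hM
    set f := iterDensity a (n+1) with hf
    have mf : Measurable (Function.uncurry f) := iter_meas a hmeas (n+1)
    set E2 : Set ((ℝ × ℝ) × (ℝ × ℝ)) := {z | z.1 ∈ tri z.2 ∧ z.2 ∈ tri M} with hE2
    have hE2m : MeasurableSet E2 :=
      E_meas.inter ((tri_meas M).preimage measurable_snd)
    set K : ℝ × ℝ → ℝ × ℝ → ENNReal := fun S U =>
      E2.indicator (fun z => ENNReal.ofReal κ * ENNReal.ofReal |f z.2 z.1|) (S, U) with hK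
    have hKm : Measurable (Function.uncurry K) := by
      have : Function.uncurry K =
          E2.indicator (fun z => ENNReal.ofReal κ * ENNReal.ofReal |f z.2 z.1|) := rfl
      rw [this]
      exact Measurable.indicator
        (measurable_const.mul (Measurable.ennreal_ofReal
          ((mf.comp (measurable_snd.prodMk measurable_fst)).abs))) hE2m
    have hpt : ∀ S ∈ tri M,
        ENNReal.ofReal |iterDensity a (n+2) M S| ≤ ∫⁻ U, K S U ∂volume := by
      intro S _
      have e1 : iterDensity a (n+2) M S = ∫ U in rect S M, a M U * f U S := rfl
      calc ENNReal.ofReal |iterDensity a (n+2) M S|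
          ≤ ∫⁻ U in rect S M, ENNReal.ofReal |a M U * f U S| ∂volume := by
            rw [e1, ← Real.norm_eq_abs]
            refine le_trans (ENNReal.ofReal_le_ofReal
              (norm_integral_le_lintegral_norm _)) ?_
            refine le_trans ENNReal.ofReal_toReal_le (le_of_eq ?_)
            simp [Real.norm_eq_abs, abs_mul]
        _ ≤ ∫⁻ U in rect S M, ENNReal.ofReal κ * ENNReal.ofReal |f U S| ∂volume := by
            refine lintegral_mono fun U => ?_
            rw [abs_mul, ← ENNReal.ofReal_mul hκ]
            exact ENNReal.ofReal_le_ofReal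
              (mul_le_mul_of_nonneg_right (ha M U) (abs_nonneg _))
        _ = ∫⁻ U, K S U ∂volume := by
            rw [← lintegral_indicator (rect_meas S M)]
            congr 1
    set c : ℝ := ((n+1).factorial : ℝ) with hc
    have hcpos : (0:ℝ) < c := by
      rw [hc]; exact_mod_cast Nat.factorial_pos (n+1)
    calc (∫⁻ S in tri M, ENNReal.ofReal |iterDensity a (n+1+1) M S| ∂volume)
        ≤ ∫⁻ S in tri M, (∫⁻ U, K S U ∂volume) ∂volume :=
          setLIntegral_mono' (tri_meas M) hpt
      _ ≤ ∫⁻ S, (∫⁻ U, K S U ∂volume) ∂volume :=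
          lintegral_mono' Measure.restrict_le_self le_rfl
      _ = ∫⁻ U, (∫⁻ S, K S U ∂volume) ∂volume :=
          lintegral_lintegral_swap hKm.aemeasurable
      _ = ∫⁻ U, (tri M).indicator
            (fun U => ENNReal.ofReal κ *
              ∫⁻ S in tri U, ENNReal.ofReal |f U S| ∂volume) U ∂volume := by
          congr 1
          funext U
          by_cases hU : U ∈ tri M
          · rw [Set.indicator_of_mem hU]
            have hKS : ∀ S, K S U = (tri U).indicator
                (fun S => ENNReal.ofReal κ * ENNReal.ofReal |f U S|) S := by
              intro S
              by_cases hs : S ∈ tri U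
              · simp only [hK, Set.indicator_of_mem (show (S, U) ∈ E2 from ⟨hs, hU⟩),
                  Set.indicator_of_mem hs]
              · simp only [hK, Set.indicator_of_notMem
                  (show (S, U) ∉ E2 from fun hc' => hs hc'.1),
                  Set.indicator_of_notMem hs]
            simp only [hKS]
            rw [lintegral_indicator (tri_meas U),
              lintegral_const_mul' _ _ ENNReal.ofReal_ne_top]
          · rw [Set.indicator_of_notMem hU]
            have hKS : ∀ S, K S U = 0 := fun S =>
              Set.indicator_of_notMem (show (S, U) ∉ E2 from fun hc' => hU hc'.2) _
            simp only [hKS, lintegral_zero]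
      _ = ∫⁻ U in tri M, ENNReal.ofReal κ *
            (∫⁻ S in tri U, ENNReal.ofReal |f U S| ∂volume) ∂volume :=
          lintegral_indicator (tri_meas M) _
      _ ≤ ∫⁻ U in tri M, ENNReal.ofReal κ *
            ENNReal.ofReal (κ ^ (n+1) * (U.2 ^ 2) ^ (n+1) / c ^ 2) ∂volume :=
          setLIntegral_mono' (tri_meas M) fun U hU =>
            mul_le_mul_right (IH U (tri_snd_nonneg hU)) _
      _ = (ENNReal.ofReal κ * ENNReal.ofReal (κ ^ (n+1) / c ^ 2)) *
            ∫⁻ U in tri M, ENNReal.ofReal (U.2 ^ (2*n+2)) ∂volume := by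
          rw [← lintegral_const_mul' _ _
            (ENNReal.mul_ne_top ENNReal.ofReal_ne_top ENNReal.ofReal_ne_top)]
          congr 1
          funext U
          have e : κ ^ (n+1) * (U.2 ^ 2) ^ (n+1) / c ^ 2 =
              (κ ^ (n+1) / c ^ 2) * U.2 ^ (2*n+2) := by
            rw [show (2*n+2) = 2*(n+1) by ring, pow_mul]; ring
          rw [e, ENNReal.ofReal_mul (div_nonneg (pow_nonneg hκ _) (by positivity))]
          ring
      _ = (ENNReal.ofReal κ * ENNReal.ofReal (κ ^ (n+1) / c ^ 2)) *
            ENNReal.ofReal (2 * M.2 ^ (2*n+4) / ((2*(n:ℝ)+3) * (2*(n:ℝ)+4))) := by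
          rw [keyInt M hM (2*n+2)]
          congr 2
          push_cast
          ring
      _ ≤ ENNReal.ofReal (κ ^ (n+1+1) * (M.2 ^ 2) ^ (n+1+1) / ((n+1+1).factorial : ℝ) ^ 2) := by
          rw [← ENNReal.ofReal_mul hκ, ← ENNReal.ofReal_mul (by positivity)]
          apply ENNReal.ofReal_le_ofReal
          have hfac : ((n+1+1).factorial : ℝ) = ((n:ℝ) + 2) * c := by
            rw [hc, Nat.factorial_succ]; push_cast; ring
          rw [hfac]
          have hc0 : c ≠ 0 := ne_of_gt hcpos
          have h3 : (2*(n:ℝ)+3) ≠ 0 := by positivity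
          have h4 : (2*(n:ℝ)+4) ≠ 0 := by positivity
          have hn0 : (0:ℝ) ≤ (n:ℝ) := Nat.cast_nonneg n
          have epow : (M.2 ^ 2) ^ (n+1+1) = M.2 ^ (2*n+4) := by
            rw [← pow_mul]; congr 1
          have core : 2/(c^2*((2*(n:ℝ)+3)*(2*(n:ℝ)+4))) ≤ 1/(((n:ℝ)+2)^2*c^2) := by
            rw [div_le_div_iff₀ (by positivity) (by positivity)]
            nlinarith [sq_nonneg c, mul_pos hcpos hcpos, sq_nonneg ((n:ℝ)),
              mul_nonneg (mul_nonneg hn0 hn0) (mul_pos hcpos hcpos).le,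
              mul_nonneg hn0 (mul_pos hcpos hcpos).le]
          calc κ * (κ ^ (n+1) / c ^ 2) * (2 * M.2 ^ (2*n+4) / ((2*(n:ℝ)+3) * (2*(n:ℝ)+4)))
              = (κ ^ (n+1+1) * M.2 ^ (2*n+4)) *
                  (2/(c^2*((2*(n:ℝ)+3)*(2*(n:ℝ)+4)))) := by
                field_simp
                ring
            _ ≤ (κ ^ (n+1+1) * M.2 ^ (2*n+4)) * (1/(((n:ℝ)+2)^2*c^2)) :=
                mul_le_mul_of_nonneg_left core
                  (mul_nonneg (pow_nonneg hκ _) (pow_nonneg hM _))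
            _ = κ ^ (n+1+1) * (M.2 ^ 2) ^ (n+1+1) / (((n:ℝ) + 2) * c) ^ 2 := by
                rw [epow, mul_one_div, mul_pow]
  
/-- factorial-squared bound for iterated kernels on nested triangles. If
`|a| ≤ κ` on `Δ_M`, then the norm of the `n`-th composed kernel, i.e.
`∫_{Δ_M} |a_n(M,S)| dS`, is at most `κⁿ |Δ_M|ⁿ / (n!)²`; consequently the series
`Σ_n κⁿ |Δ_M|ⁿ / (n!)²` converges. -/
theorem stmt18 (a : ℝ × ℝ → ℝ × ℝ → ℝ) (κ : ℝ) (M : ℝ × ℝ) (hM : 0 < M.2)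
    (hκ : 0 ≤ κ) (ha : ∀ U S : ℝ × ℝ, |a U S| ≤ κ)
    (hmeas : Measurable (Function.uncurry a)) :
    (∀ n : ℕ, 1 ≤ n →
      (∫ S in tri M, |iterDensity a n M S| ∂volume) ≤
        κ ^ n * ((volume (tri M)).toReal) ^ n / ((Nat.factorial n : ℝ)) ^ 2) ∧
    Summable (fun n : ℕ => κ ^ n * ((volume (tri M)).toReal) ^ n / ((Nat.factorial n : ℝ)) ^ 2) := by
  have hvolR : (volume (tri M)).toReal = M.2 ^ 2 := by
    rw [vol_tri M hM.le, ENNReal.toReal_ofReal (by positivity)]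
  constructor
  · intro n hn
    obtain ⟨m, rfl⟩ : ∃ m, n = m + 1 := ⟨n - 1, (Nat.succ_pred_eq_of_pos hn).symm⟩
    have hG := Gbound a κ hκ ha hmeas m M hM.le
    have hms : Measurable fun S => iterDensity a (m+1) M S :=
      (iter_meas a hmeas (m+1)).comp (measurable_const.prodMk measurable_id)
    rw [integral_eq_lintegral_of_nonneg_ae (ae_of_all _ fun S => abs_nonneg _)
      (hms.abs.aestronglyMeasurable)]
    rw [hvolR]
    calc (∫⁻ S in tri M, ENNReal.ofReal |iterDensity a (m+1) M S| ∂volume).toReal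
        ≤ (ENNReal.ofReal (κ ^ (m+1) * (M.2 ^ 2) ^ (m+1) /
            ((m+1).factorial : ℝ) ^ 2)).toReal :=
          ENNReal.toReal_mono ENNReal.ofReal_ne_top hG
      _ = κ ^ (m+1) * (M.2 ^ 2) ^ (m+1) / ((m+1).factorial : ℝ) ^ 2 :=
          ENNReal.toReal_ofReal (div_nonneg
            (mul_nonneg (pow_nonneg hκ _) (pow_nonneg (sq_nonneg _) _))
            (pow_nonneg (Nat.cast_nonneg _) _))
  · set V : ℝ := (volume (tri M)).toReal with hV
    have hVnn : 0 ≤ V := ENNReal.toReal_nonneg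
    apply Summable.of_nonneg_of_le
      (fun n => div_nonneg (mul_nonneg (pow_nonneg hκ _) (pow_nonneg hVnn _))
        (pow_nonneg (Nat.cast_nonneg _) _))
      (fun n => ?_) (Real.summable_pow_div_factorial (κ * V))
    rw [← mul_pow]
    have h1 : (1:ℝ) ≤ (n.factorial : ℝ) := by
      exact_mod_cast Nat.one_le_iff_ne_zero.mpr n.factorial_ne_zero
    exact div_le_div_of_nonneg_left (pow_nonneg (mul_nonneg hκ hVnn) _)
      (by linarith) (by nlinarith)
end
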